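/- arXiv:2406.06260 — 12 statements merged into one kernel-verified Lean document; each statement's English description precedes it below -/
import Mathlib

section
/- For every natural number n ≥ 4 there exists a solution to the (n,2)-queens problem, i.e., a non-attacking set of n queens on the (n,2)-board. -/
/-- A point `q` lies on the `(n,d)`-board, i.e. all coordinates are in `{1,…,n}`. -/
def onBoard (n d : ℕ) (q : Fin d → ℕ) : Prop :=
  ∀ i, 1 ≤ q i ∧ q i ≤ n

/-- Queen `a` attacks queen `b`: there are an integer `m` and a nonzero vector
`ε ∈ {-1,0,1}^d` with `a i = ε i * m + b i` for all `i`. -/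
def attacks {d : ℕ} (a b : Fin d → ℕ) : Prop :=
  ∃ (m : ℤ) (ε : Fin d → ℤ), (∀ i, ε i = -1 ∨ ε i = 0 ∨ ε i = 1) ∧ ε ≠ 0 ∧
    ∀ i, (a i : ℤ) = ε i * m + (b i : ℤ)

/-- A set of queens is non-attacking if no two distinct members attack each other. -/
def nonAttacking {d : ℕ} (Q : Finset (Fin d → ℕ)) : Prop :=
  ∀ a ∈ Q, ∀ b ∈ Q, a ≠ b → ¬ attacks a b

/-- A partial solution on the `(n,d)`-board: a non-attacking set fitting the board. -/
def isPartial (n d : ℕ) (Q : Finset (Fin d → ℕ)) : Prop :=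
  (∀ q ∈ Q, onBoard n d q) ∧ nonAttacking Q

/-- A solution to the `(n,d)`-queens problem: a non-attacking set of `n^(d-1)` queens. -/
def isSolution (n d : ℕ) (Q : Finset (Fin d → ℕ)) : Prop :=
  isPartial n d Q ∧ Q.card = n ^ (d - 1)

/-- The `(n,d)`-board as a finite set. -/
def boardFinset (n d : ℕ) : Finset (Fin d → ℕ) :=
  Fintype.piFinset fun _ => Finset.Icc 1 n

/-- `Qmax n d` : the maximum cardinality of a non-attacking set on the `(n,d)`-board. -/
noncomputable def Qmax (n d : ℕ) : ℕ :=
  sSup {k | ∃ Q : Finset (Fin d → ℕ), isPartial n d Q ∧ Q.card = k}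

/-!
Queens are placed on the graph `{(i, f i)}` of a permutation `f` of `{1, …, n}`; this set is
non-attacking as soon as `i + f i` and `i - f i` are injective as well. For `n = 2k` with
`k ≢ 1 [MOD 3]` the permutation listing the even columns and then the odd ones works, and for
`k ≢ 0 [MOD 3]` (with `k ≥ 2`) a cyclically shifted variant of it does. Neither puts a queen on
the main diagonal, so for odd `n` one more queen fits into the corner `(n, n)`.
-/

theorem attacks_fin_two {a b : Fin 2 → ℕ} (h : attacks a b) :
    a 0 = b 0 ∨ a 1 = b 1 ∨ a 0 + a 1 = b 0 + b 1 ∨ (a 0 : ℤ) - a 1 = b 0 - b 1 := by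
  obtain ⟨m, ε, hε, hε0, heq⟩ := h
  have hε01 : ¬(ε 0 = 0 ∧ ε 1 = 0) := fun h => hε0 (funext (Fin.forall_fin_two.2 h))
  have h0 := heq 0
  have h1 := heq 1
  rcases hε 0 with e0 | e0 | e0 <;> rcases hε 1 with e1 | e1 | e1 <;>
    rw [e0] at h0 <;> rw [e1] at h1 <;> omega

structure IsQueenPlacement (n : ℕ) (f : ℕ → ℕ) : Prop where
  mapsTo : Set.MapsTo f (Set.Icc 1 n) (Set.Icc 1 n)
  injOn : Set.InjOn f (Set.Icc 1 n)
  injOn_add : Set.InjOn (fun i => i + f i) (Set.Icc 1 n)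
  injOn_sub : Set.InjOn (fun i : ℕ => (i : ℤ) - f i) (Set.Icc 1 n)

namespace IsQueenPlacement

variable {n : ℕ} {f : ℕ → ℕ}

theorem isSolution (hf : IsQueenPlacement n f) :
    isSolution n 2 ((Finset.Icc 1 n).image fun i => ![i, f i]) := by
  have hinj : Set.InjOn (fun i => ![i, f i]) (Finset.Icc 1 n) := fun i _ j _ h =>
    by simpa using congrFun h 0
  refine ⟨⟨?_, ?_⟩, ?_⟩
  · simp only [Finset.forall_mem_image, Finset.mem_Icc]
    intro i hi k
    fin_cases k
    · simpa using hi
    · simpa using hf.mapsTo hi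
  · simp only [nonAttacking, Finset.forall_mem_image, Finset.mem_Icc]
    intro i hi j hj hne hatt
    have hij : i ≠ j := fun h => hne (h ▸ rfl)
    rcases attacks_fin_two hatt with h | h | h | h
    · exact hij h
    · exact hij (hf.injOn hi hj h)
    · exact hij (hf.injOn_add hi hj h)
    · exact hij (hf.injOn_sub hi hj h)
  · rw [Finset.card_image_of_injOn hinj, Nat.card_Icc, Nat.add_sub_cancel, pow_one]

theorem succ (hf : IsQueenPlacement n f) (hfix : ∀ i ∈ Set.Icc 1 n, f i ≠ i) :
    IsQueenPlacement (n + 1) (fun i => if i = n + 1 then n + 1 else f i) := by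
  have below : ∀ i ∈ Set.Icc 1 (n + 1), i ≠ n + 1 → i ∈ Set.Icc 1 n := fun i hi hne =>
    ⟨hi.1, by have := hi.2; omega⟩
  have col : ∀ i ∈ Set.Icc 1 n, i ≤ n ∧ 1 ≤ f i ∧ f i ≤ n ∧ f i ≠ i := fun i hi =>
    ⟨hi.2, (hf.mapsTo hi).1, (hf.mapsTo hi).2, hfix i hi⟩
  refine ⟨fun i hi => ?_, fun i hi j hj h => ?_, fun i hi j hj h => ?_, fun i hi j hj h => ?_⟩
  · simp only [Set.mem_Icc] at hi ⊢
    split_ifs with hi'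
    · omega
    · have := col i (below i hi hi'); omega
  all_goals
    beta_reduce at h
    split_ifs at h with hi' hj' hj'
    · omega
    · have := col j (below j hj hj'); omega
    · have := col i (below i hi hi'); omega
  · exact hf.injOn (below i hi hi') (below j hj hj') h
  · exact hf.injOn_add (below i hi hi') (below j hj hj') h
  · exact hf.injOn_sub (below i hi hi') (below j hj hj') h

end IsQueenPlacement

def stairPlacement (k i : ℕ) : ℕ :=
  if i ≤ k then 2 * i else 2 * (i - k) - 1

/-- The first half is `i ↦ 1 + (2i + k - 3) mod 2k`, and the second half its image under the
half-turn `(i, j) ↦ (2k + 1 - i, 2k + 1 - j)` of the board. -/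
def shiftedStairPlacement (k i : ℕ) : ℕ :=
  if i ≤ k then (if 2 * i ≤ k + 2 then 2 * i + k - 2 else 2 * i - k - 2)
  else (if 2 * i < 3 * k then 2 * i + 1 - k else 2 * i + 1 - 3 * k)

theorem stairPlacement_isQueenPlacement {k : ℕ} (hk : k % 3 ≠ 1) :
    IsQueenPlacement (2 * k) (stairPlacement k) := by
  refine ⟨fun i hi => ?_, fun i hi j hj h => ?_, fun i hi j hj h => ?_, fun i hi j hj h => ?_⟩ <;>
    simp only [Set.mem_Icc, stairPlacement] at * <;> split_ifs at * <;> lia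

theorem stairPlacement_ne_self {k i : ℕ} (hi : i ∈ Set.Icc 1 (2 * k)) :
    stairPlacement k i ≠ i := by
  simp only [Set.mem_Icc, stairPlacement] at *; split_ifs <;> lia

theorem shiftedStairPlacement_isQueenPlacement {k : ℕ} (hk : 2 ≤ k) (hk3 : k % 3 ≠ 0) :
    IsQueenPlacement (2 * k) (shiftedStairPlacement k) := by
  refine ⟨fun i hi => ?_, fun i hi j hj h => ?_, fun i hi j hj h => ?_, fun i hi j hj h => ?_⟩ <;>
    simp only [Set.mem_Icc, shiftedStairPlacement] at * <;> split_ifs at * <;> lia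

theorem shiftedStairPlacement_ne_self {k i : ℕ} (hk : 2 ≤ k) (hi : i ∈ Set.Icc 1 (2 * k)) :
    shiftedStairPlacement k i ≠ i := by
  simp only [Set.mem_Icc, shiftedStairPlacement] at *; split_ifs <;> lia

theorem exists_isQueenPlacement_two_mul {k : ℕ} (hk : 2 ≤ k) :
    ∃ f, IsQueenPlacement (2 * k) f ∧ ∀ i ∈ Set.Icc 1 (2 * k), f i ≠ i := by
  by_cases hk3 : k % 3 = 1
  · exact ⟨_, shiftedStairPlacement_isQueenPlacement hk (by omega),
      fun _ => shiftedStairPlacement_ne_self hk⟩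
  · exact ⟨_, stairPlacement_isQueenPlacement hk3, fun _ => stairPlacement_ne_self⟩

/-- For every `n ≥ 4` the `(n,2)`-queens problem has a solution:
a non-attacking set of `n` queens on the `(n,2)`-board. -/
theorem nQueens_two_dim_exists (n : ℕ) (hn : 4 ≤ n) :
    ∃ Q : Finset (Fin 2 → ℕ), isSolution n 2 Q := by
  obtain ⟨f, hf⟩ : ∃ f, IsQueenPlacement n f := by
    obtain ⟨k, rfl | rfl⟩ := Nat.even_or_odd' n
    · exact (exists_isQueenPlacement_two_mul (by omega)).imp fun _ h => h.1
    · obtain ⟨f, hf, hfix⟩ := exists_isQueenPlacement_two_mul (k := k) (by omega)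
      exact ⟨_, hf.succ hfix⟩
  exact ⟨_, hf.isSolution⟩
end

section
/- Let d ≥ 2 and let a, b be two distinct points of the (n,d)-board that attack each other (in the standard sense). Then a and b also attack each other modularly, i.e., there exists a nonzero ε ∈ {−1,0,1}^d with Σ_{i=1}^d ε_i·a_i ≡ Σ_{i=1}^d ε_i·b_i (mod n). Consequently, every modularly non-attacking configuration on the (n,d)-board is a non-attacking configuration in the standard sense. -/
/-- `a` attacks `b` modularly (on the torus): there is a nonzero `ε ∈ {-1,0,1}^d`
with `Σ ε i * a i ≡ Σ ε i * b i (mod n)`. -/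
def modAttacks (n : ℕ) {d : ℕ} (a b : Fin d → ℕ) : Prop :=
  ∃ ε : Fin d → ℤ, (∀ i, ε i = -1 ∨ ε i = 0 ∨ ε i = 1) ∧ ε ≠ 0 ∧
    (∑ i, ε i * (a i : ℤ)) ≡ (∑ i, ε i * (b i : ℤ)) [ZMOD (n : ℤ)]

/-! An attack says `a - b = m ε` for a sign vector `ε`. As soon as `d ≥ 2`, some nonzero sign
vector `δ` is orthogonal to `ε` (a unit vector at a zero entry of `ε`, or else `ε j e_i - ε i e_j`),
and then `δ · a = δ · b` holds exactly, in particular modulo `n`. -/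

theorem exists_ne_zero_sign_vector_sum_mul_eq_zero {d : ℕ} (hd : 2 ≤ d) (ε : Fin d → ℤ)
    (hε : ∀ i, ε i = -1 ∨ ε i = 0 ∨ ε i = 1) :
    ∃ δ : Fin d → ℤ, (∀ i, δ i = -1 ∨ δ i = 0 ∨ δ i = 1) ∧ δ ≠ 0 ∧ ∑ i, δ i * ε i = 0 := by
  obtain ⟨i, j, hij⟩ : ∃ i j : Fin d, i ≠ j := ⟨⟨0, by omega⟩, ⟨1, by omega⟩, by simp [Fin.ext_iff]⟩
  by_cases hεi : ε i = 0
  · refine ⟨Pi.single i 1, fun k => ?_, by simp, by simp [Pi.single_apply, hεi]⟩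
    by_cases hk : k = i <;> simp [hk]
  · refine ⟨Pi.single i (ε j) - Pi.single j (ε i), fun k => ?_, fun h => hεi ?_, ?_⟩
    · rcases eq_or_ne k i with rfl | hki
      · simpa [hij] using hε j
      rcases eq_or_ne k j with rfl | hkj
      · rcases hε i with h | h | h <;> simp [hki, h]
      · simp [hki, hkj]
    · simpa [hij.symm] using congrFun h j
    · simp only [Pi.sub_apply, sub_mul, Finset.sum_sub_distrib, Pi.single_apply, ite_mul, zero_mul,
        Finset.sum_ite_eq', Finset.mem_univ, if_true]
      ring

theorem sum_mul_eq_of_eq_mul_add {d : ℕ} {a b ε δ : Fin d → ℤ} {m : ℤ}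
    (hab : ∀ i, a i = ε i * m + b i) (hδ : ∑ i, δ i * ε i = 0) :
    ∑ i, δ i * a i = ∑ i, δ i * b i := by
  calc ∑ i, δ i * a i = (∑ i, δ i * ε i) * m + ∑ i, δ i * b i := by
        simp only [hab, mul_add, Finset.sum_add_distrib, Finset.sum_mul, mul_assoc]
    _ = ∑ i, δ i * b i := by rw [hδ, zero_mul, zero_add]

theorem attacks.modAttacks {d : ℕ} (n : ℕ) (hd : 2 ≤ d) {a b : Fin d → ℕ} (h : attacks a b) :
    modAttacks n a b := by
  obtain ⟨m, ε, hε, -, hab⟩ := h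
  obtain ⟨δ, hδ, hδ0, hδε⟩ := exists_ne_zero_sign_vector_sum_mul_eq_zero hd ε hε
  exact ⟨δ, hδ, hδ0, (sum_mul_eq_of_eq_mul_add hab hδε).symm ▸ Int.ModEq.refl _⟩

/-- For `d ≥ 2`, any standard attack between distinct board points is also a modular
attack; consequently every modularly non-attacking configuration on the `(n,d)`-board
is non-attacking in the standard sense. -/
theorem attack_implies_modular_attack (n d : ℕ) (hd : 2 ≤ d) :
    (∀ a b : Fin d → ℕ, onBoard n d a → onBoard n d b → a ≠ b →
      attacks a b → modAttacks n a b) ∧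
    (∀ Q : Finset (Fin d → ℕ), (∀ q ∈ Q, onBoard n d q) →
      (∀ a ∈ Q, ∀ b ∈ Q, a ≠ b → ¬ modAttacks n a b) → nonAttacking Q) := by
  refine ⟨fun a b _ _ _ h => h.modAttacks n hd, ?_⟩
  intro Q _ hmod a ha b hb hab hatt
  exact hmod a ha b hb hab (hatt.modAttacks n hd)
end

section
/- Let Q be a solution to the (n,3)-queens problem, i.e., a non-attacking set of n² queens on the (n,3)-board. Then for every i ∈ {1,…,n}, the layer Q_i = {q ∈ Q : q_3 = i} has exactly n elements, the projection q ↦ (q_1, q_2) is injective on Q_i, and its image is a non-attacking set of n queens on the (n,2)-board. Thus Q yields n pairwise disjoint (superimposable) solutions to the (n,2)-queens problem. -/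

lemma attacks_of_agree_off {a b : Fin 3 → ℕ} (k : Fin 3)
    (h : ∀ i, i ≠ k → a i = b i) : attacks a b := by
  refine ⟨(a k : ℤ) - b k, fun i => if i = k then 1 else 0, ?_, ?_, ?_⟩
  · intro i; by_cases hik : i = k <;> simp [hik]
  · intro h0
    have := congrFun h0 k
    simp at this
  · intro i
    by_cases hik : i = k
    · subst hik; simp
    · simp [hik, h i hik]

lemma eq_of_agree_off {n : ℕ} {Q : Finset (Fin 3 → ℕ)} (hQ : isPartial n 3 Q)
    {a b : Fin 3 → ℕ} (ha : a ∈ Q) (hb : b ∈ Q) (k : Fin 3)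
    (h : ∀ i, i ≠ k → a i = b i) : a = b := by
  by_contra hne
  exact hQ.2 a ha b hb hne (attacks_of_agree_off k h)

/-- Every solution to the `(n,3)`-queens problem splits into `n` layers of `n` queens
each; projecting a layer to its first two coordinates is injective and yields a
solution to the `(n,2)`-queens problem, and the `n` resulting solutions are pairwise
disjoint (superimposable). -/
theorem layers_of_3d_solution (n : ℕ) (hn : 1 ≤ n) (Q : Finset (Fin 3 → ℕ))
    (hQ : isPartial n 3 Q) (hcard : Q.card = n ^ 2) :
    (∀ i : ℕ, 1 ≤ i → i ≤ n →
      ((Q.filter (fun q => q 2 = i)).card = n ∧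
       Set.InjOn (fun (q : Fin 3 → ℕ) (j : Fin 2) => q j.castSucc)
         ↑(Q.filter (fun q => q 2 = i)) ∧
       isSolution n 2
         ((Q.filter (fun q => q 2 = i)).image
           (fun (q : Fin 3 → ℕ) (j : Fin 2) => q j.castSucc)))) ∧
    (∀ i i' : ℕ, 1 ≤ i → i ≤ n → 1 ≤ i' → i' ≤ n → i ≠ i' →
      Disjoint
        ((Q.filter (fun q => q 2 = i)).image
          (fun (q : Fin 3 → ℕ) (j : Fin 2) => q j.castSucc))
        ((Q.filter (fun q => q 2 = i')).image
          (fun (q : Fin 3 → ℕ) (j : Fin 2) => q j.castSucc))) := by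
  
  set proj : (Fin 3 → ℕ) → (Fin 2 → ℕ) := fun q j => q j.castSucc with hproj
  have hinjQ : ∀ a ∈ Q, ∀ b ∈ Q, a 0 = b 0 → a 1 = b 1 → a = b := by
    intro a ha b hb h0 h1
    refine eq_of_agree_off hQ ha hb 2 ?_
    intro i hi
    fin_cases i
    · exact h0
    · exact h1
    · exact absurd rfl hi
  have hinjOn : ∀ i : ℕ, Set.InjOn proj ↑(Q.filter (fun q => q 2 = i)) := by
    intro i a ha b hb hab
    simp only [Finset.coe_filter, Set.mem_setOf_eq] at ha hb
    have h0 : a 0 = b 0 := by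
      have := congrFun hab 0
      simpa [hproj] using this
    have h1 : a 1 = b 1 := by
      have := congrFun hab 1
      simpa [hproj] using this
    exact hinjQ a ha.1 b hb.1 h0 h1
  -- layer cardinalities
  have hsum : ∑ i ∈ Finset.Icc 1 n, (Q.filter (fun q => q 2 = i)).card = n ^ 2 := by
    rw [← hcard]
    refine (Finset.card_eq_sum_card_fiberwise ?_).symm
    intro q hq
    have := hQ.1 q hq 2
    simp [Finset.mem_Icc, this]
  have hle : ∀ i ∈ Finset.Icc 1 n, (Q.filter (fun q => q 2 = i)).card ≤ n := by
    intro i _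
    have : (Q.filter (fun q => q 2 = i)).card ≤ (Finset.Icc 1 n).card := by
      refine Finset.card_le_card_of_injOn (fun q => q 0) ?_ ?_
      · intro q hq
        rw [Finset.mem_coe, Finset.mem_filter] at hq
        have := hQ.1 q hq.1 0
        simp [Finset.mem_Icc, this]
      · intro a ha b hb h0
        simp only [Finset.coe_filter, Set.mem_setOf_eq] at ha hb
        refine eq_of_agree_off hQ ha.1 hb.1 1 ?_
        intro j hj
        fin_cases j
        · exact h0
        · exact absurd rfl hj
        · exact ha.2.trans hb.2.symm
    simpa [Nat.card_Icc] using this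
  have hall : ∀ i ∈ Finset.Icc 1 n, (Q.filter (fun q => q 2 = i)).card = n := by
    by_contra hcon
    push_neg at hcon
    obtain ⟨i, hi, hne⟩ := hcon
    have hlt : (Q.filter (fun q => q 2 = i)).card < n := lt_of_le_of_ne (hle i hi) hne
    have hslt : ∑ j ∈ Finset.Icc 1 n, (Q.filter (fun q => q 2 = j)).card
        < ∑ _j ∈ Finset.Icc 1 n, n :=
      Finset.sum_lt_sum hle ⟨i, hi, hlt⟩
    rw [hsum] at hslt
    simp only [Finset.sum_const, Nat.card_Icc, smul_eq_mul] at hslt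
    rw [Nat.add_sub_cancel, ← pow_two] at hslt
    exact lt_irrefl _ hslt
  -- non-attacking images
  have hboard2 : ∀ i : ℕ,
      ∀ p ∈ (Q.filter (fun q => q 2 = i)).image proj, onBoard n 2 p := by
    intro i p hp
    rw [Finset.mem_image] at hp
    obtain ⟨q, hq, rfl⟩ := hp
    rw [Finset.mem_filter] at hq
    intro j
    exact hQ.1 q hq.1 j.castSucc
  have hnonatt : ∀ i : ℕ, nonAttacking ((Q.filter (fun q => q 2 = i)).image proj) := by
    intro i p hp p' hp' hpne hatt
    rw [Finset.mem_image] at hp hp'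
    obtain ⟨a, ha, rfl⟩ := hp
    obtain ⟨b, hb, rfl⟩ := hp'
    rw [Finset.mem_filter] at ha hb
    obtain ⟨m, ε, hε, hε0, heq⟩ := hatt
    have habne : a ≠ b := fun h => hpne (by rw [h])
    apply hQ.2 a ha.1 b hb.1 habne
    refine ⟨m, Fin.snoc ε 0, ?_, ?_, ?_⟩
    · intro j
      rcases Fin.eq_castSucc_or_eq_last j with ⟨j', rfl⟩ | rfl
      · simpa using hε j'
      · rw [Fin.snoc_last]; simp
    · intro h0
      rw [Function.ne_iff] at hε0
      obtain ⟨j, hj⟩ := hε0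
      have := congrFun h0 j.castSucc
      simp at this
      exact hj this
    · intro j
      rcases Fin.eq_castSucc_or_eq_last j with ⟨j', rfl⟩ | rfl
      · have := heq j'
        simpa [hproj] using this
      · have h2 : a 2 = b 2 := ha.2.trans hb.2.symm
        have h2' : a (Fin.last 2) = b (Fin.last 2) := h2
        rw [Fin.snoc_last, h2']; simp
  constructor
  · intro i h1 h2
    have hi : i ∈ Finset.Icc 1 n := Finset.mem_Icc.mpr ⟨h1, h2⟩
    refine ⟨hall i hi, hinjOn i, ⟨⟨hboard2 i, hnonatt i⟩, ?_⟩⟩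
    rw [Finset.card_image_of_injOn (hinjOn i), hall i hi]
    simp
  · intro i i' h1 h2 h1' h2' hii
    rw [Finset.disjoint_left]
    intro p hp hp'
    rw [Finset.mem_image] at hp hp'
    obtain ⟨a, ha, rfl⟩ := hp
    obtain ⟨b, hb, hba⟩ := hp'
    rw [Finset.mem_filter] at ha hb
    have hab : a = b := by
      refine eq_of_agree_off hQ ha.1 hb.1 2 ?_
      intro j hj
      fin_cases j
      · exact (congrFun hba 0).symm
      · exact (congrFun hba 1).symm
      · exact absurd rfl hj
    apply hii
    rw [← ha.2, ← hb.2, hab]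
end

section
/- If gcd(n, 210) = 1, then the (n,3)-queens problem has a solution: the set of n² points whose coordinates, read in ℤ/nℤ, are {(i, j, 3i + 5j mod n) : i, j ∈ ℤ/nℤ} is a non-attacking set of n² queens on the (n,3)-board. -/
open Finset

theorem ZMod.natCast_injOn_Icc (n : ℕ) : Set.InjOn (Nat.cast : ℕ → ZMod n) (Set.Icc 1 n) := by
  intro a ⟨ha1, han⟩ b ⟨hb1, hbn⟩ hab
  have hdvd : (n : ℤ) ∣ b - a :=
    (ZMod.intCast_eq_intCast_iff_dvd_sub _ _ _).mp (by exact_mod_cast hab)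
  have : (b : ℤ) - a = 0 := Int.eq_zero_of_abs_lt_dvd hdvd (by rw [abs_sub_lt_iff]; omega)
  omega

theorem ZMod.exists_mem_Icc_natCast_eq {n : ℕ} [NeZero n] (r : ZMod n) :
    ∃ k ∈ Icc 1 n, (k : ZMod n) = r :=
  ⟨(r - 1).val + 1, by simpa using (r - 1).val_lt, by simp⟩

theorem Nat.Coprime.coprime_of_le_nine {n k : ℕ} (h : n.Coprime 210) (hk0 : 0 < k) (hk : k ≤ 9) :
    n.Coprime k := by
  have hdvd : k ∣ 210 ^ 3 := by interval_cases k <;> norm_num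
  exact (h.pow_right 3).coprime_dvd_right hdvd

theorem ZMod.isUnit_intCast_of_coprime_natAbs {n : ℕ} {c : ℤ} (h : n.Coprime c.natAbs) :
    IsUnit (c : ZMod n) := by
  rw [ZMod.coe_int_isUnit_iff_isCoprime, Int.isCoprime_iff_gcd_eq_one]
  simpa [Int.gcd] using h

def linearQueens (n : ℕ) (a b : ZMod n) : Finset (Fin 3 → ℕ) :=
  (boardFinset n 3).filter fun q => (q 2 : ZMod n) = a * q 0 + b * q 1

section LinearQueens

variable {n : ℕ} {a b : ZMod n}

theorem mem_linearQueens {q : Fin 3 → ℕ} :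
    q ∈ linearQueens n a b ↔ onBoard n 3 q ∧ (q 2 : ZMod n) = a * q 0 + b * q 1 := by
  simp [linearQueens, boardFinset, onBoard]

theorem card_linearQueens [NeZero n] : (linearQueens n a b).card = n ^ 2 := by
  calc (linearQueens n a b).card = (Icc 1 n ×ˢ Icc 1 n).card := by
        refine card_bij (fun q _ => (q 0, q 1)) ?_ ?_ ?_
        · intro q hq
          have hq := (mem_linearQueens.mp hq).1
          simpa using ⟨hq 0, hq 1⟩
        · intro p hp q hq hpq
          obtain ⟨hp, hpz⟩ := mem_linearQueens.mp hp
          obtain ⟨hq, hqz⟩ := mem_linearQueens.mp hq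
          obtain ⟨h0, h1⟩ := Prod.mk.inj hpq
          have h2 : p 2 = q 2 :=
            ZMod.natCast_injOn_Icc n (hp 2) (hq 2) (by simp only [hpz, hqz, h0, h1])
          ext i
          fin_cases i <;> assumption
        · intro ⟨x, y⟩ hxy
          obtain ⟨hx, hy⟩ : x ∈ Icc 1 n ∧ y ∈ Icc 1 n := mem_product.mp hxy
          obtain ⟨z, hz, hzr⟩ :=
            ZMod.exists_mem_Icc_natCast_eq (a * (x : ZMod n) + b * (y : ZMod n))
          refine ⟨![x, y, z], mem_linearQueens.mpr ⟨?_, hzr⟩, rfl⟩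
          intro i
          fin_cases i
          exacts [mem_Icc.mp hx, mem_Icc.mp hy, mem_Icc.mp hz]
    _ = n ^ 2 := by simp [sq]

theorem nonAttacking_linearQueens
    (hunit : ∀ ε : Fin 3 → ℤ, (∀ i, ε i = -1 ∨ ε i = 0 ∨ ε i = 1) → ε ≠ 0 →
      IsUnit ((ε 2 : ZMod n) - a * ε 0 - b * ε 1)) :
    nonAttacking (linearQueens n a b) := by
  rintro p hp q hq hpq ⟨m, ε, hε, hε0, hstep⟩
  obtain ⟨hp, hpz⟩ := mem_linearQueens.mp hp
  obtain ⟨hq, hqz⟩ := mem_linearQueens.mp hq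
  have hstep' : ∀ i, (p i : ZMod n) = ε i * m + q i := fun i => by
    exact_mod_cast congrArg (Int.cast : ℤ → ZMod n) (hstep i)
  have hm : (m : ZMod n) = 0 := by
    refine (hunit ε hε hε0).mul_right_eq_zero.mp ?_
    linear_combination a * hstep' 0 + b * hstep' 1 - hstep' 2 + hpz - hqz
  exact hpq <| funext fun i =>
    ZMod.natCast_injOn_Icc n (hp i) (hq i) (by rw [hstep' i, hm, mul_zero, zero_add])

end LinearQueens

theorem isUnit_sub_three_mul_sub_five_mul {n : ℕ} (h : n.Coprime 210) (ε : Fin 3 → ℤ)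
    (hε : ∀ i, ε i = -1 ∨ ε i = 0 ∨ ε i = 1) (hε0 : ε ≠ 0) :
    IsUnit ((ε 2 : ZMod n) - 3 * ε 0 - 5 * ε 1) := by
  have hε0' : ε 0 ≠ 0 ∨ ε 1 ≠ 0 ∨ ε 2 ≠ 0 := by
    contrapose! hε0
    ext i
    fin_cases i <;> simp [hε0]
  have hc : 0 < (ε 2 - 3 * ε 0 - 5 * ε 1).natAbs ∧ (ε 2 - 3 * ε 0 - 5 * ε 1).natAbs ≤ 9 := by
    rcases hε 0 with h0 | h0 | h0 <;> rcases hε 1 with h1 | h1 | h1 <;>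
      rcases hε 2 with h2 | h2 | h2 <;> omega
  exact_mod_cast ZMod.isUnit_intCast_of_coprime_natAbs (h.coprime_of_le_nine hc.1 hc.2)

/-- Klarner's construction: if `gcd(n,210) = 1`, the set of board points whose
coordinates, read in `ℤ/nℤ`, satisfy `z = 3x + 5y` is a non-attacking set of `n²`
queens on the `(n,3)`-board, i.e. a solution to the `(n,3)`-queens problem. -/
theorem klarner_construction (n : ℕ) (h : Nat.gcd n 210 = 1) :
    isSolution n 3
      ((boardFinset n 3).filter
        (fun q => (q 2 : ZMod n) = 3 * (q 0 : ZMod n) + 5 * (q 1 : ZMod n))) := by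
  have : NeZero n := ⟨by rintro rfl; simp at h⟩
  refine ⟨⟨fun q hq => (mem_linearQueens.mp hq).1, ?_⟩, card_linearQueens⟩
  exact nonAttacking_linearQueens (isUnit_sub_three_mul_sub_five_mul h)
end

section
/- Let Q be a solution to the (n,3)-queens problem (a non-attacking set of n² queens on the (n,3)-board), let 1 ≤ k < n, and suppose the corner subcube {n−k+1,…,n}³ contains exactly p queens of Q. Then the restriction Q ∩ {1,…,n−k}³ is a non-attacking set of exactly n² − 3kn + 3k² − p queens on the (n−k,3)-board. In particular, a partial solution of that size exists on the (n−k,3)-board. -/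
/-! In a solution of the `(n,3)`-queens problem, two queens agreeing in two coordinates would
attack along the third axis, so the projection of the `n²` queens to any coordinate plane is a
bijection onto `{1,…,n}²`. Hence exactly `k n` queens have a given coordinate above `n - k` and
exactly `k²` have two given coordinates above `n - k`; inclusion–exclusion over the three
coordinates counts the queens of the small cube `{1,…,n-k}³`. -/

open Finset

theorem attacks_of_forall_ne_eq {d : ℕ} {a b : Fin d → ℕ} (l : Fin d)
    (h : ∀ t, t ≠ l → a t = b t) : attacks a b := by
  refine ⟨(a l : ℤ) - b l, Pi.single l 1, fun t => ?_, by simp, fun t => ?_⟩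
  · by_cases ht : t = l <;> simp [ht]
  · by_cases ht : t = l
    · subst ht; simp
    · simp [ht, h t ht]

theorem Fin.exists_forall_ne_imp_eq_or_eq {i j : Fin 3} (hij : i ≠ j) :
    ∃ l, ∀ t, t ≠ l → t = i ∨ t = j := by
  revert i j; decide

theorem nonAttacking.injOn_pair {Q : Finset (Fin 3 → ℕ)} (hQ : nonAttacking Q) {i j : Fin 3}
    (hij : i ≠ j) : Set.InjOn (fun q : Fin 3 → ℕ => (q i, q j)) Q := by
  intro a ha b hb hab
  obtain ⟨hi, hj⟩ := Prod.ext_iff.mp hab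
  obtain ⟨l, hl⟩ := Fin.exists_forall_ne_imp_eq_or_eq hij
  by_contra hne
  refine hQ a ha b hb hne (attacks_of_forall_ne_eq l fun t ht => ?_)
  rcases hl t ht with rfl | rfl <;> assumption

theorem isPartial.filter_le {n m d : ℕ} {Q : Finset (Fin d → ℕ)} (hQ : isPartial n d Q) :
    isPartial m d (Q.filter fun q => ∀ i, q i ≤ m) := by
  refine ⟨fun q hq i => ?_, fun a ha b hb => hQ.2 a (mem_filter.1 ha).1 b (mem_filter.1 hb).1⟩
  rw [mem_filter] at hq
  exact ⟨(hQ.1 q hq.1 i).1, hq.2 i⟩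

theorem isSolution.image_pair {n : ℕ} {Q : Finset (Fin 3 → ℕ)} (hQ : isSolution n 3 Q)
    {i j : Fin 3} (hij : i ≠ j) : Q.image (fun q => (q i, q j)) = Icc 1 n ×ˢ Icc 1 n := by
  refine eq_of_subset_of_card_le (fun x hx => ?_) ?_
  · obtain ⟨q, hq, rfl⟩ := mem_image.1 hx
    have hb := hQ.1.1 q hq
    simp only [mem_product, mem_Icc]
    exact ⟨hb i, hb j⟩
  · rw [card_image_of_injOn (nonAttacking.injOn_pair hQ.1.2 hij), hQ.2, card_product,
      Nat.card_Icc]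
    simp [sq]

theorem isSolution.card_filter_pair {n : ℕ} {Q : Finset (Fin 3 → ℕ)} (hQ : isSolution n 3 Q)
    {i j : Fin 3} (hij : i ≠ j) (P : ℕ × ℕ → Prop) [DecidablePred P] :
    #(Q.filter fun q => P (q i, q j)) = #((Icc 1 n ×ˢ Icc 1 n).filter P) := by
  rw [← hQ.image_pair hij, filter_image,
    card_image_of_injOn ((nonAttacking.injOn_pair hQ.1.2 hij).mono (filter_subset _ _))]

theorem Nat.card_filter_Icc_one_lt (c n : ℕ) : #((Icc 1 n).filter (c < ·)) = n - c := by
  rw [← Nat.card_Ioc c n]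
  congr 1
  ext x
  simp only [mem_filter, mem_Icc, mem_Ioc]
  omega

theorem isSolution.card_filter_lt {n : ℕ} {Q : Finset (Fin 3 → ℕ)} (hQ : isSolution n 3 Q)
    (c : ℕ) (i : Fin 3) : #(Q.filter fun q => c < q i) = (n - c) * n := by
  have hi : i ≠ i + 1 := by fin_cases i <;> decide
  rw [hQ.card_filter_pair hi (fun x => c < x.1), filter_product_left, card_product,
    Nat.card_filter_Icc_one_lt, Nat.card_Icc, Nat.add_sub_cancel]

theorem isSolution.card_filter_lt_lt {n : ℕ} {Q : Finset (Fin 3 → ℕ)} (hQ : isSolution n 3 Q)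
    (c : ℕ) {i j : Fin 3} (hij : i ≠ j) :
    #(Q.filter fun q => c < q i ∧ c < q j) = (n - c) * (n - c) := by
  rw [hQ.card_filter_pair hij (fun x => c < x.1 ∧ c < x.2), filter_product, card_product,
    Nat.card_filter_Icc_one_lt]

theorem Finset.card_filter_not_or_three {α : Type*} (s : Finset α) (A B C : α → Prop)
    [DecidablePred A] [DecidablePred B] [DecidablePred C] :
    (#(s.filter fun x => ¬(A x ∨ B x ∨ C x)) : ℤ) =
      #s - #(s.filter A) - #(s.filter B) - #(s.filter C) + #(s.filter fun x => A x ∧ B x)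
        + #(s.filter fun x => A x ∧ C x) + #(s.filter fun x => B x ∧ C x)
        - #(s.filter fun x => A x ∧ B x ∧ C x) := by
  simp only [natCast_card_filter]
  rw [cast_card]
  simp only [← sum_sub_distrib, ← sum_add_distrib]
  refine sum_congr rfl fun x _ => ?_
  by_cases A x <;> by_cases B x <;> by_cases C x <;> simp [*]

theorem subcube_heuristic_3d_general (n k p : ℕ) (hkn : k < n)
    (Q : Finset (Fin 3 → ℕ)) (hQ : isSolution n 3 Q)
    (hp : (Q.filter (fun q => ∀ i, n - k + 1 ≤ q i)).card = p) :
    isPartial (n - k) 3 (Q.filter (fun q => ∀ i, q i ≤ n - k)) ∧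
    ((Q.filter (fun q => ∀ i, q i ≤ n - k)).card : ℤ) =
      (n : ℤ) ^ 2 - 3 * k * n + 3 * k ^ 2 - p := by
  refine ⟨hQ.1.filter_le, ?_⟩
  set c := n - k
  have hc : n - c = k := by omega
  have hlow : Q.filter (fun q => ∀ i, q i ≤ c)
      = Q.filter fun q => ¬(c < q 0 ∨ c < q 1 ∨ c < q 2) :=
    filter_congr fun q _ => by simp [Fin.forall_fin_succ]
  have hhigh : Q.filter (fun q => ∀ i, c + 1 ≤ q i)
      = Q.filter fun q => c < q 0 ∧ c < q 1 ∧ c < q 2 :=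
    filter_congr fun q _ => by simp [Fin.forall_fin_succ]
  rw [hlow, card_filter_not_or_three, ← hhigh, hp, hQ.2, hQ.card_filter_lt, hQ.card_filter_lt,
    hQ.card_filter_lt, hQ.card_filter_lt_lt c (by decide), hQ.card_filter_lt_lt c (by decide),
    hQ.card_filter_lt_lt c (by decide), hc]
  push_cast
  ring

/-- Subcube heuristic in 3D: if `Q` solves the `(n,3)`-queens problem, `1 ≤ k < n`,
and the corner subcube `{n-k+1,…,n}³` contains exactly `p` queens of `Q`, then
`Q ∩ {1,…,n-k}³` is a non-attacking set of exactly `n² - 3kn + 3k² - p` queens on the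
`(n-k,3)`-board. -/
theorem subcube_heuristic_3d (n k p : ℕ) (hk1 : 1 ≤ k) (hkn : k < n)
    (Q : Finset (Fin 3 → ℕ)) (hQ : isSolution n 3 Q)
    (hp : (Q.filter (fun q => ∀ i, n - k + 1 ≤ q i)).card = p) :
    isPartial (n - k) 3 (Q.filter (fun q => ∀ i, q i ≤ n - k)) ∧
    ((Q.filter (fun q => ∀ i, q i ≤ n - k)).card : ℤ) =
      (n : ℤ) ^ 2 - 3 * k * n + 3 * k ^ 2 - p :=
  subcube_heuristic_3d_general n k p hkn Q hQ hp
end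

section
/- For every n ≥ 1 there exists a non-attacking set Q of queens on the (n,3)-board with (|Q| : ℤ) ≥ n² − 10n − 32; that is, Q_max(n,3) ≥ n² − 10n − 32 for all n. -/
set_option maxRecDepth 10000

namespace QueensAux

/-- In any window of 10 consecutive integers there is one coprime to 210. -/
lemma exists_coprime_shift (n : ℕ) : ∃ k : ℕ, k < 10 ∧ Nat.Coprime (n + k + 1) 210 := by
  have key : ∀ r < 210, ∃ k < 10, Nat.Coprime ((r + k + 1) % 210) 210 := by decide
  obtain ⟨k, hk, hcop⟩ := key (n % 210) (Nat.mod_lt _ (by norm_num))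
  refine ⟨k, hk, ?_⟩
  have h1 : (n + k + 1) % 210 = (n % 210 + k + 1) % 210 := by omega
  have h2 : Nat.gcd 210 (n + k + 1) = 1 := by
    rw [Nat.gcd_rec 210 (n + k + 1), h1]
    exact hcop
  exact Nat.coprime_comm.mp h2

lemma cop8 (q : ℕ) (hcop : Nat.Coprime q 210) (v : ℕ) (h1 : 1 ≤ v) (h8 : v ≤ 8) :
    Nat.Coprime q v := by
  have h2 : Nat.Coprime q 2 := Nat.Coprime.coprime_dvd_right (by norm_num) hcop
  have h3 : Nat.Coprime q 3 := Nat.Coprime.coprime_dvd_right (by norm_num) hcop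
  have h5 : Nat.Coprime q 5 := Nat.Coprime.coprime_dvd_right (by norm_num) hcop
  have h7 : Nat.Coprime q 7 := Nat.Coprime.coprime_dvd_right (by norm_num) hcop
  interval_cases v
  · exact Nat.coprime_one_right q
  · exact h2
  · exact h3
  · exact h2.mul_right h2
  · exact h5
  · exact h2.mul_right h3
  · exact h7
  · exact (h2.mul_right h2).mul_right h2

end QueensAux

namespace QueensAux

/-- The z-coordinate of the modular construction. -/
def qz (q x y : ℕ) : ℕ := (2 * x + 5 * y) % q

/-- Good base points. -/
def goodS (n q : ℕ) : Finset (ℕ × ℕ) :=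
  (Finset.Icc 1 n ×ˢ Finset.Icc 1 n).filter fun p => 1 ≤ qz q p.1 p.2 ∧ qz q p.1 p.2 ≤ n

/-- The queen set. -/
def QQ (n q : ℕ) : Finset (Fin 3 → ℕ) :=
  (goodS n q).image fun p => ![p.1, p.2, qz q p.1 p.2]

lemma mem_goodS {n q : ℕ} {p : ℕ × ℕ} (hp : p ∈ goodS n q) :
    (1 ≤ p.1 ∧ p.1 ≤ n) ∧ (1 ≤ p.2 ∧ p.2 ≤ n) ∧ (1 ≤ qz q p.1 p.2 ∧ qz q p.1 p.2 ≤ n) := by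
  simp only [goodS, Finset.mem_filter, Finset.mem_product, Finset.mem_Icc] at hp
  tauto

lemma qz_dvd (q x y : ℕ) :
    (q : ℤ) ∣ (2 * (x : ℤ) + 5 * (y : ℤ)) - (qz q x y : ℤ) := by
  have hmod : ((2 * x + 5 * y : ℕ) : ℤ) % (q : ℤ) = ((qz q x y : ℕ) : ℤ) := by
    rw [qz]
    push_cast
    rfl
  have h := Int.dvd_self_sub_of_emod_eq hmod
  have h2 : ((2 * x + 5 * y : ℕ) : ℤ) = 2 * (x : ℤ) + 5 * (y : ℤ) := by push_cast; ring
  rwa [h2] at h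

lemma QQ_partial (n q : ℕ) (hnq : n < q) (hcop : Nat.Coprime q 210) :
    isPartial n 3 (QQ n q) := by
  constructor
  · intro a ha
    obtain ⟨p, hp, rfl⟩ := Finset.mem_image.1 ha
    obtain ⟨⟨hx1, hx2⟩, ⟨hy1, hy2⟩, hz1, hz2⟩ := mem_goodS hp
    intro i
    fin_cases i
    · simpa using ⟨hx1, hx2⟩
    · simpa using ⟨hy1, hy2⟩
    · simpa using ⟨hz1, hz2⟩
  · intro a ha b hb hab hatk
    obtain ⟨⟨x, y⟩, hp, rfl⟩ := Finset.mem_image.1 ha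
    obtain ⟨⟨x', y'⟩, hp', rfl⟩ := Finset.mem_image.1 hb
    obtain ⟨⟨hx1, hx2⟩, ⟨hy1, hy2⟩, hz1, hz2⟩ := mem_goodS hp
    obtain ⟨⟨hx1', hx2'⟩, ⟨hy1', hy2'⟩, hz1', hz2'⟩ := mem_goodS hp'
    obtain ⟨m, ε, hε, hεne, heq⟩ := hatk
    have h0 := heq 0
    have h1 := heq 1
    have h2 := heq 2
    simp only [Matrix.cons_val_zero, Matrix.cons_val_one, Matrix.head_cons,
      Matrix.cons_val_two, Matrix.tail_cons] at h0 h1 h2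
    -- key divisibility
    have hkey : (q : ℤ) ∣ (2 * ε 0 + 5 * ε 1 - ε 2) * m := by
      have hd := dvd_sub (qz_dvd q x y) (qz_dvd q x' y')
      have e : (2 * (x : ℤ) + 5 * (y : ℤ) - ((qz q x y : ℕ) : ℤ)) -
          (2 * (x' : ℤ) + 5 * (y' : ℤ) - ((qz q x' y' : ℕ) : ℤ)) =
          (2 * ε 0 + 5 * ε 1 - ε 2) * m := by
        linear_combination 2 * h0 + 5 * h1 - h2
      rwa [e] at hd
    by_cases h00 : ε 0 = 0 ∧ ε 1 = 0
    · rw [h00.1] at h0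
      rw [h00.2] at h1
      have hx : x = x' := by omega
      have hy : y = y' := by omega
      subst hx; subst hy
      exact hab rfl
    · -- bounds on m
      have hmq : -(q : ℤ) < m ∧ m < q := by
        rcases hε 0 with he0 | he0 | he0 <;> rcases hε 1 with he1 | he1 | he1 <;>
          rw [he0] at h0 <;> rw [he1] at h1 <;>
          first
            | (constructor <;> omega)
            | exact absurd ⟨he0, he1⟩ h00
      have hc : (2 * ε 0 + 5 * ε 1 - ε 2) ≠ 0 ∧ (2 * ε 0 + 5 * ε 1 - ε 2).natAbs ≤ 8 := by
        rcases hε 0 with he0 | he0 | he0 <;> rcases hε 1 with he1 | he1 | he1 <;>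
          rcases hε 2 with he2 | he2 | he2 <;> rw [he0, he1, he2] <;>
          first
            | decide
            | exact absurd ⟨he0, he1⟩ h00
      have hiscop : IsCoprime (q : ℤ) (2 * ε 0 + 5 * ε 1 - ε 2) := by
        rw [Int.isCoprime_iff_gcd_eq_one]
        have hna : 1 ≤ (2 * ε 0 + 5 * ε 1 - ε 2).natAbs := by
          have := hc.1
          omega
        have hco := cop8 q hcop (2 * ε 0 + 5 * ε 1 - ε 2).natAbs hna hc.2
        simpa [Int.gcd] using hco
      have hqm : (q : ℤ) ∣ m := hiscop.dvd_of_dvd_mul_left hkey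
      have hm0 : m = 0 := by
        by_contra hm
        have hle : (q : ℤ) ≤ |m| := Int.le_of_dvd (abs_pos.mpr hm) ((dvd_abs _ _).mpr hqm)
        have hlt : |m| < (q : ℤ) := abs_lt.mpr ⟨hmq.1, hmq.2⟩
        linarith
      rw [hm0] at h0 h1
      simp only [mul_zero, zero_add] at h0 h1
      have hx : x = x' := by exact_mod_cast h0
      have hy : y = y' := by exact_mod_cast h1
      subst hx; subst hy
      exact hab rfl

lemma QQ_card (n q : ℕ) (hnq : n < q) (hq10 : q ≤ n + 10) (hcop : Nat.Coprime q 210) :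
    ((QQ n q).card : ℤ) ≥ (n : ℤ) ^ 2 - 10 * n := by
  classical
  have hq0 : 0 < q := by omega
  -- image is injective
  have hQc : (QQ n q).card = (goodS n q).card := by
    apply Finset.card_image_of_injOn
    intro p hp p' hp' h
    have e0 := congrFun h 0
    have e1 := congrFun h 1
    simp only [Matrix.cons_val_zero, Matrix.cons_val_one, Matrix.head_cons] at e0 e1
    exact Prod.ext e0 e1
  -- the bad set
  set bad : Finset (ℕ × ℕ) :=
    (Finset.Icc 1 n ×ˢ Finset.Icc 1 n).filter
      (fun p => ¬(1 ≤ qz q p.1 p.2 ∧ qz q p.1 p.2 ≤ n)) with hbad_def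
  have hsum : (goodS n q).card + bad.card = n * n := by
    rw [goodS, hbad_def, Finset.card_filter_add_card_filter_not]
    simp [Nat.card_Icc]
  have h5cop : Nat.Coprime q 5 := Nat.Coprime.coprime_dvd_right (by norm_num) hcop
  have hbadcard : bad.card ≤ n * 10 := by
    have hB : bad.card ≤ (Finset.Icc 1 n ×ˢ insert 0 (Finset.Ico (n + 1) q)).card := by
      apply Finset.card_le_card_of_injOn (fun p => (p.1, qz q p.1 p.2))
      · intro p hp
        rw [hbad_def] at hp
        simp only [Finset.mem_coe, Finset.mem_filter, Finset.mem_product, Finset.mem_Icc] at hp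
        have hlt : qz q p.1 p.2 < q := Nat.mod_lt _ hq0
        simp only [Finset.mem_coe, Finset.mem_product, Finset.mem_Icc, Finset.mem_insert, Finset.mem_Ico]
        refine ⟨⟨hp.1.1.1, hp.1.1.2⟩, ?_⟩
        omega
      · intro p hp p' hp' hpe
        have hpe' : (p.1, qz q p.1 p.2) = (p'.1, qz q p'.1 p'.2) := hpe
        obtain ⟨e1, e2⟩ := Prod.mk.inj hpe'
        simp only [hbad_def, Finset.coe_filter, Set.mem_setOf_eq, Finset.mem_product,
          Finset.mem_Icc] at hp hp'
        rw [e1] at e2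
        have hmeq : 2 * p'.1 + 5 * p.2 ≡ 2 * p'.1 + 5 * p'.2 [MOD q] := e2
        have h5 : 5 * p.2 ≡ 5 * p'.2 [MOD q] := Nat.ModEq.add_left_cancel' (2 * p'.1) hmeq
        have hy : p.2 ≡ p'.2 [MOD q] := Nat.ModEq.cancel_left_of_coprime h5cop h5
        have e3 : p.2 = p'.2 := Nat.ModEq.eq_of_lt_of_lt hy (by omega) (by omega)
        exact Prod.ext e1 e3
    have hBcard : (Finset.Icc 1 n ×ˢ insert 0 (Finset.Ico (n + 1) q)).card ≤ n * 10 := by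
      rw [Finset.card_product, Nat.card_Icc]
      have h10 : (insert 0 (Finset.Ico (n + 1) q)).card ≤ 10 := by
        have h := Finset.card_insert_le 0 (Finset.Ico (n + 1) q)
        rw [Nat.card_Ico] at h
        omega
      have hn1 : n + 1 - 1 = n := by omega
      rw [hn1]
      exact Nat.mul_le_mul_left n h10
    exact le_trans hB hBcard
  have hsq : (n : ℤ) ^ 2 = (n : ℤ) * n := by ring
  have h1 : ((goodS n q).card : ℤ) + (bad.card : ℤ) = (n : ℤ) * n := by exact_mod_cast hsum
  have h2 : (bad.card : ℤ) ≤ (n : ℤ) * 10 := by exact_mod_cast hbadcard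
  rw [hQc]
  linarith

end QueensAux

/-- For every `n ≥ 1` there is a non-attacking set `Q` on the `(n,3)`-board with
`|Q| ≥ n² - 10n - 32`; that is, `Qmax(n,3) ≥ n² - 10n - 32`. -/
theorem qmax_3d_lower_bound (n : ℕ) (hn : 1 ≤ n) :
    (∃ Q : Finset (Fin 3 → ℕ), isPartial n 3 Q ∧
      (Q.card : ℤ) ≥ (n : ℤ) ^ 2 - 10 * n - 32) ∧
    ((Qmax n 3 : ℤ) ≥ (n : ℤ) ^ 2 - 10 * n - 32) := by
  obtain ⟨k, hk10, hcop⟩ := QueensAux.exists_coprime_shift n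
  set q : ℕ := n + k + 1 with hqdef
  have hnq : n < q := by omega
  have hq10 : q ≤ n + 10 := by omega
  have hpart := QueensAux.QQ_partial n q hnq hcop
  have hcard := QueensAux.QQ_card n q hnq hq10 hcop
  have hge : ((QueensAux.QQ n q).card : ℤ) ≥ (n : ℤ) ^ 2 - 10 * n - 32 := by linarith
  refine ⟨⟨QueensAux.QQ n q, hpart, hge⟩, ?_⟩
  have hbdd : BddAbove {c | ∃ Q : Finset (Fin 3 → ℕ), isPartial n 3 Q ∧ Q.card = c} := by
    refine ⟨(boardFinset n 3).card, ?_⟩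
    rintro c ⟨Q, hQ, rfl⟩
    apply Finset.card_le_card
    intro x hx
    have hob := hQ.1 x hx
    simp only [boardFinset, Fintype.mem_piFinset, Finset.mem_Icc]
    intro i
    exact hob i
  have hle : (QueensAux.QQ n q).card ≤ Qmax n 3 :=
    le_csSup hbdd ⟨QueensAux.QQ n q, hpart, rfl⟩
  have hc2 : ((QueensAux.QQ n q).card : ℤ) ≤ (Qmax n 3 : ℤ) := by exact_mod_cast hle
  linarith
end

section
/- The ratio Q_max(n,3)/n² tends to 1 as n → ∞; i.e., the sequence n ↦ (Q_max(n,3) : ℝ)/n² converges to 1. -/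
lemma partial_card_le (n : ℕ) (Q : Finset (Fin 3 → ℕ)) (h : isPartial n 3 Q) :
    Q.card ≤ n ^ 2 := by
  classical
  have hinj : Set.InjOn (fun q : Fin 3 → ℕ => (q 0, q 1)) Q := by
    intro a ha b hb hab
    by_contra hne
    simp only [Prod.mk.injEq] at hab
    refine h.2 a ha b hb hne ⟨(a 2 : ℤ) - b 2, ![0,0,1], by decide, ?_, ?_⟩
    · intro h0
      have := congrFun h0 2
      simp at this
    · intro i
      fin_cases i <;> simp [hab.1, hab.2]
  have hsub : Q.image (fun q => (q 0, q 1)) ⊆ (Finset.Icc 1 n) ×ˢ (Finset.Icc 1 n) := by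
    intro p hp
    simp only [Finset.mem_image] at hp
    obtain ⟨q, hq, rfl⟩ := hp
    have h0 := (h.1 q hq) 0
    have h1 := (h.1 q hq) 1
    simp [Finset.mem_product, Finset.mem_Icc, h0, h1]
  calc Q.card = (Q.image fun q => (q 0, q 1)).card := (Finset.card_image_of_injOn hinj).symm
    _ ≤ ((Finset.Icc 1 n) ×ˢ (Finset.Icc 1 n)).card := Finset.card_le_card hsub
    _ = n ^ 2 := by simp [Nat.card_Icc, sq]

lemma qmax_le (n : ℕ) : Qmax n 3 ≤ n ^ 2 := by
  have hne : (0:ℕ) ∈ {k | ∃ Q : Finset (Fin 3 → ℕ), isPartial n 3 Q ∧ Q.card = k} :=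
    ⟨∅, ⟨by simp [isPartial, nonAttacking, onBoard], rfl⟩⟩
  refine csSup_le ⟨0, hne⟩ ?_
  rintro k ⟨Q, hQ, rfl⟩
  exact partial_card_le n Q hQ

lemma qmax_bdd (n : ℕ) :
    BddAbove {k | ∃ Q : Finset (Fin 3 → ℕ), isPartial n 3 Q ∧ Q.card = k} := by
  refine ⟨n ^ 2, ?_⟩
  rintro k ⟨Q, hQ, rfl⟩
  exact partial_card_le n Q hQ

def qn (m x y : ℕ) : Fin 3 → ℕ := ![x, y, (2*x + 4*y) % m + 1]

lemma cop_of_mod_one (m k : ℕ) (h : m % k = 1) : Nat.Coprime m k := by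
  rw [Nat.Coprime, Nat.gcd_comm, Nat.gcd_rec, h, Nat.gcd_one_left]

lemma dvd_cancel (m : ℕ) (hm : m % 210 = 1) (c M : ℤ) (hc0 : c ≠ 0) (hc7 : |c| ≤ 7)
    (hdvd : (m:ℤ) ∣ c * M) : (m:ℤ) ∣ M := by
  have h2 : m % 2 = 1 := by omega
  have h3 : m % 3 = 1 := by omega
  have h5 : m % 5 = 1 := by omega
  have h7 : m % 7 = 1 := by omega
  have c2 := cop_of_mod_one m 2 h2
  have c3 := cop_of_mod_one m 3 h3
  have c5 := cop_of_mod_one m 5 h5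
  have c7 := cop_of_mod_one m 7 h7
  have hcop : Nat.Coprime m c.natAbs := by
    have hk1 : 1 ≤ c.natAbs := Int.natAbs_pos.mpr hc0
    have hk7 : c.natAbs ≤ 7 := by
      rcases abs_le.mp hc7 with ⟨hl, hr⟩; omega
    set k := c.natAbs with hk
    interval_cases k
    · exact Nat.coprime_one_right m
    · exact c2
    · exact c3
    · have := c2.mul_right c2; norm_num at this; exact this
    · exact c5
    · have := c2.mul_right c3; norm_num at this; exact this
    · exact c7
  have hicop : IsCoprime (m:ℤ) c := by
    rw [Int.isCoprime_iff_gcd_eq_one]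
    simpa [Int.gcd] using hcop
  exact hicop.dvd_of_dvd_mul_left hdvd

lemma qn_onBoard (m x y : ℕ) (hm1 : 1 ≤ m) (hx : x ∈ Finset.Icc 1 m)
    (hy : y ∈ Finset.Icc 1 m) : ∀ i, 1 ≤ qn m x y i ∧ qn m x y i ≤ m := by
  simp only [Finset.mem_Icc] at hx hy
  have hz := Nat.mod_lt (2*x + 4*y) (show 0 < m by omega)
  intro i
  fin_cases i <;> simp [qn] <;> omega

lemma qn_nonattacking (m : ℕ) (hm : m % 210 = 1) (x1 y1 x2 y2 : ℕ)
    (hx1 : x1 ∈ Finset.Icc 1 m) (hy1 : y1 ∈ Finset.Icc 1 m)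
    (hx2 : x2 ∈ Finset.Icc 1 m) (hy2 : y2 ∈ Finset.Icc 1 m)
    (hne : qn m x1 y1 ≠ qn m x2 y2) : ¬ attacks (qn m x1 y1) (qn m x2 y2) := by
  rintro ⟨M, ε, hε, hε0, heq⟩
  have hm1 : 1 ≤ m := by omega
  have e0 := heq 0
  have e1 := heq 1
  have e2 := heq 2
  simp only [qn, Matrix.cons_val_zero, Matrix.cons_val_one, Matrix.head_cons,
    Matrix.cons_val_two, Matrix.tail_cons] at e0 e1 e2
  push_cast at e0 e1 e2
  -- key divisibility
  have d1 : (m:ℤ) ∣ (2*(x1:ℤ)+4*(y1:ℤ)) - (2*(x1:ℤ)+4*(y1:ℤ)) % m :=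
    Int.dvd_self_sub_of_emod_eq rfl
  have d2 : (m:ℤ) ∣ (2*(x2:ℤ)+4*(y2:ℤ)) - (2*(x2:ℤ)+4*(y2:ℤ)) % m :=
    Int.dvd_self_sub_of_emod_eq rfl
  have key : (m:ℤ) ∣ (2*ε 0 + 4*ε 1 - ε 2) * M := by
    have hid : (2*ε 0 + 4*ε 1 - ε 2) * M =
        ((2*(x1:ℤ)+4*(y1:ℤ)) - (2*(x1:ℤ)+4*(y1:ℤ)) % m)
        - ((2*(x2:ℤ)+4*(y2:ℤ)) - (2*(x2:ℤ)+4*(y2:ℤ)) % m) := by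
      linear_combination e2 - 2 * e0 - 4 * e1
    rw [hid]
    exact dvd_sub d1 d2
  have hM0 : M ≠ 0 := by
    rintro rfl
    apply hne
    funext i
    have hi := heq i
    simp only [mul_zero, zero_add] at hi
    exact_mod_cast hi
  have hεne : ¬(ε 0 = 0 ∧ ε 1 = 0 ∧ ε 2 = 0) := by
    rintro ⟨h0, h1, h2⟩
    apply hε0
    funext i
    fin_cases i <;> simp only [Pi.zero_apply] <;> assumption
  have hc0 : (2*ε 0 + 4*ε 1 - ε 2) ≠ 0 := by
    rcases hε 0 with h0|h0|h0 <;> rcases hε 1 with h1|h1|h1 <;> rcases hε 2 with h2|h2|h2 <;>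
      (first | (rw [h0, h1, h2]; norm_num; done) | exact absurd ⟨h0, h1, h2⟩ hεne)
  have hc7 : |2*ε 0 + 4*ε 1 - ε 2| ≤ 7 := by
    rcases hε 0 with h0|h0|h0 <;> rcases hε 1 with h1|h1|h1 <;> rcases hε 2 with h2|h2|h2 <;>
      rw [h0, h1, h2] <;> norm_num
  have hmdvd : (m:ℤ) ∣ M := dvd_cancel m hm _ M hc0 hc7 key
  obtain ⟨i, hi⟩ := Function.ne_iff.mp hε0
  have hεabs : |ε i| = 1 := by
    rcases hε i with h|h|h <;> simp [h] at hi ⊢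
  have hb1 := qn_onBoard m x1 y1 hm1 hx1 hy1 i
  have hb2 := qn_onBoard m x2 y2 hm1 hx2 hy2 i
  have h1 : (qn m x1 y1 i : ℤ) - (qn m x2 y2 i : ℤ) = ε i * M := by
    have := heq i; linarith
  have hMle : |M| ≤ (m:ℤ) - 1 := by
    calc |M| = |ε i * M| := by rw [abs_mul, hεabs, one_mul]
      _ = |(qn m x1 y1 i : ℤ) - (qn m x2 y2 i : ℤ)| := by rw [h1]
      _ ≤ (m:ℤ) - 1 := by
          rw [abs_le]
          constructor <;> omega
  have hge : (m:ℤ) ≤ |M| := Int.le_of_dvd (abs_pos.mpr hM0) ((dvd_abs _ _).mpr hmdvd)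
  omega

lemma qmax_ge (n m : ℕ) (hm : m % 210 = 1) (hmn : m ≤ n) : m ^ 2 ≤ Qmax n 3 := by
  classical
  have hm1 : 1 ≤ m := by omega
  set Q : Finset (Fin 3 → ℕ) :=
    ((Finset.Icc 1 m) ×ˢ (Finset.Icc 1 m)).image (fun p : ℕ × ℕ => qn m p.1 p.2) with hQ
  have hinj : Set.InjOn (fun p : ℕ × ℕ => qn m p.1 p.2)
      ((((Finset.Icc 1 m) ×ˢ (Finset.Icc 1 m) : Finset (ℕ × ℕ))) : Set (ℕ × ℕ)) := by
    intro p hp q hq h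
    have h0 := congrFun h 0
    have h1 := congrFun h 1
    simp only [qn, Matrix.cons_val_zero, Matrix.cons_val_one, Matrix.head_cons] at h0 h1
    exact Prod.ext h0 h1
  have hcard : Q.card = m ^ 2 := by
    rw [hQ, Finset.card_image_of_injOn hinj, Finset.card_product, Nat.card_Icc]
    simp [sq]
  have hpart : isPartial n 3 Q := by
    constructor
    · intro q hq
      rw [hQ] at hq
      simp only [Finset.mem_image, Finset.mem_product] at hq
      obtain ⟨p, ⟨hpx, hpy⟩, rfl⟩ := hq
      intro i
      have h := qn_onBoard m p.1 p.2 hm1 hpx hpy i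
      exact ⟨h.1, le_trans h.2 hmn⟩
    · intro a ha b hb hab
      rw [hQ] at ha hb
      simp only [Finset.mem_image, Finset.mem_product] at ha hb
      obtain ⟨p, ⟨hpx, hpy⟩, rfl⟩ := ha
      obtain ⟨q, ⟨hqx, hqy⟩, rfl⟩ := hb
      exact qn_nonattacking m hm p.1 p.2 q.1 q.2 hpx hpy hqx hqy hab
  exact le_csSup (qmax_bdd n) ⟨Q, hpart, hcard⟩

lemma qmax_real_lb (n : ℕ) (hn : 210 ≤ n) : ((n:ℝ) - 209)^2 ≤ (Qmax n 3 : ℝ) := by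
  set m := n - (n-1) % 210 with hm
  have h1 : m % 210 = 1 := by omega
  have h2 : m ≤ n := by omega
  have h3 : n - 209 ≤ m := by omega
  have hnat : (n - 209)^2 ≤ Qmax n 3 :=
    le_trans (Nat.pow_le_pow_left h3 2) (qmax_ge n m h1 h2)
  have hcast : ((n - 209 : ℕ) : ℝ) = (n:ℝ) - 209 := by
    rw [Nat.cast_sub (by omega)]; norm_num
  calc ((n:ℝ) - 209)^2 = ((n - 209 : ℕ) : ℝ)^2 := by rw [hcast]
    _ ≤ (Qmax n 3 : ℝ) := by exact_mod_cast hnat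


/-- The ratio `Qmax(n,3) / n²` tends to `1` as `n → ∞`. -/
theorem qmax_3d_ratio_tendsto_one :
    Filter.Tendsto (fun n : ℕ => (Qmax n 3 : ℝ) / (n : ℝ) ^ 2)
      Filter.atTop (nhds 1) := by
  have hupper : ∀ᶠ n : ℕ in Filter.atTop, (Qmax n 3 : ℝ) / (n:ℝ)^2 ≤ 1 := by
    filter_upwards [Filter.eventually_ge_atTop 1] with n hn
    have hpos : (0:ℝ) < (n:ℝ)^2 := by
      have : (0:ℝ) < (n:ℝ) := by exact_mod_cast hn
      positivity
    rw [div_le_one hpos]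
    exact_mod_cast qmax_le n
  have hlower : ∀ᶠ n : ℕ in Filter.atTop,
      (1 - 209/(n:ℝ))^2 ≤ (Qmax n 3 : ℝ) / (n:ℝ)^2 := by
    filter_upwards [Filter.eventually_ge_atTop 210] with n hn
    have hn0 : (n:ℝ) ≠ 0 := by
      have : (0:ℕ) < n := by omega
      exact_mod_cast this.ne'
    rw [le_div_iff₀ (by positivity)]
    calc (1 - 209/(n:ℝ))^2 * (n:ℝ)^2 = ((n:ℝ) - 209)^2 := by field_simp
      _ ≤ _ := qmax_real_lb n hn
  have hg : Filter.Tendsto (fun n : ℕ => (1 - 209/(n:ℝ))^2) Filter.atTop (nhds 1) := by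
    have h1 : Filter.Tendsto (fun n : ℕ => 1 - 209/(n:ℝ)) Filter.atTop (nhds 1) := by
      have h0 := tendsto_const_div_atTop_nhds_zero_nat (209:ℝ)
      simpa using tendsto_const_nhds.sub h0
    simpa using h1.pow 2
  exact tendsto_of_tendsto_of_tendsto_of_le_of_le' hg tendsto_const_nhds hlower hupper
end

section
/- For every queen q on the (n,d)-board, the number of squares attacked by q, including its own square, is at least (2^d − 1)·(n − 1) + 1; this minimum is attained by the queen placed at the corner (1, 1, …, 1). -/
open scoped Classical in
/-- The set of board squares attacked by the queen `q`, including its own square. -/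
noncomputable def attackedSet (n d : ℕ) (q : Fin d → ℕ) : Finset (Fin d → ℕ) :=
  (boardFinset n d).filter (fun b => b = q ∨ attacks q b)


/-!
A square `b ≠ q` is attacked by `q` exactly when `b i - q i ∈ {-m, 0, m}` for all `i` and a
common `m ≥ 1`, which is then the sup-distance from `q` to `b`, so `1 ≤ m ≤ n - 1`. For fixed `m`
these squares together with `q` form the product `queenRing n q m` of the sets
`R_i(m) = ringValues n (q i) m = {q i - m, q i, q i + m} ∩ [1, n]`, of size
`[m < q i] + 1 + [q i + m ≤ n]`. Each `|R_i(m)|` is antitone in `m` and sums to `2 (n - 1)` over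
`1 ≤ m ≤ n - 1`, so Chebyshev's sum inequality gives `∑ m, ∏ i, |R_i(m)| ≥ 2 ^ d (n - 1)`.
At the corner every `|R_i(m)|` is `2`.
-/

open Finset

theorem Finset.card_mul_prod_sum_le_card_pow_mul_sum_prod {ι κ R : Type*} [DecidableEq ι]
    [LinearOrder κ] [CommSemiring R] [LinearOrder R] [IsStrictOrderedRing R] [ExistsAddOfLE R]
    (s : Finset ι) (t : Finset κ) (f : ι → κ → R) (hf₀ : ∀ i ∈ s, ∀ m ∈ t, 0 ≤ f i m)
    (hf : ∀ i ∈ s, AntitoneOn (f i) t) :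
    #t * ∏ i ∈ s, ∑ m ∈ t, f i m ≤ #t ^ #s * ∑ m ∈ t, ∏ i ∈ s, f i m := by
  induction s using Finset.induction_on with
  | empty => simp
  | insert j s hj ih =>
    have hs₀ : ∀ i ∈ s, ∀ m ∈ t, 0 ≤ f i m := fun i hi => hf₀ i (mem_insert_of_mem hi)
    have hprod : AntitoneOn (fun m => ∏ i ∈ s, f i m) t := fun a ha b hb hab =>
      prod_le_prod (fun i hi => hs₀ i hi b hb) fun i hi => hf i (mem_insert_of_mem hi) ha hb hab
    have hcheb := ((hf j (mem_insert_self j s)).monovaryOn hprod).sum_mul_sum_le_card_mul_sum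
    have hj₀ : 0 ≤ ∑ m ∈ t, f j m := sum_nonneg (hf₀ j (mem_insert_self j s))
    calc (#t : R) * ∏ i ∈ insert j s, ∑ m ∈ t, f i m
        = (∑ m ∈ t, f j m) * (#t * ∏ i ∈ s, ∑ m ∈ t, f i m) := by
          rw [prod_insert hj]; ring
      _ ≤ (∑ m ∈ t, f j m) * (#t ^ #s * ∑ m ∈ t, ∏ i ∈ s, f i m) :=
          mul_le_mul_of_nonneg_left (ih hs₀ fun i hi => hf i (mem_insert_of_mem hi)) hj₀
      _ = #t ^ #s * ((∑ m ∈ t, f j m) * ∑ m ∈ t, ∏ i ∈ s, f i m) := by ring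
      _ ≤ #t ^ #s * (#t * ∑ m ∈ t, f j m * ∏ i ∈ s, f i m) :=
          mul_le_mul_of_nonneg_left hcheb (by positivity)
      _ = #t ^ #(insert j s) * ∑ m ∈ t, ∏ i ∈ insert j s, f i m := by
          simp_rw [prod_insert hj, card_insert_of_notMem hj]; ring

def ringValues (n x m : ℕ) : Finset ℕ :=
  (Icc 1 n).filter fun y => y + m = x ∨ y = x ∨ y = x + m

def queenRing (n : ℕ) {d : ℕ} (q : Fin d → ℕ) (m : ℕ) : Finset (Fin d → ℕ) :=
  Fintype.piFinset fun i => ringValues n (q i) m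

theorem attacks_iff_exists_ring {d : ℕ} {q b : Fin d → ℕ} (hbq : b ≠ q) :
    attacks q b ↔ ∃ m, 0 < m ∧ ∀ i, b i + m = q i ∨ b i = q i ∨ b i = q i + m := by
  constructor
  · rintro ⟨m, ε, hε, hε0, heq⟩
    have hm : m ≠ 0 := by
      rintro rfl
      exact hbq (funext fun i => by simpa using (heq i).symm)
    refine ⟨m.natAbs, by omega, fun i => ?_⟩
    have := heq i
    rcases hε i with h | h | h <;> rw [h] at this <;> omega
  · rintro ⟨m, hm, hb⟩
    obtain ⟨i₀, hi₀⟩ := Function.ne_iff.mp hbq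
    refine ⟨m, fun i => Int.sign ((q i : ℤ) - b i),
      fun i => by have := Int.sign_trichotomy ((q i : ℤ) - b i); tauto,
      fun h => hi₀ ?_, fun i => ?_⟩
    · have := congrFun h i₀
      simp only [Pi.zero_apply, Int.sign_eq_zero_iff_zero, sub_eq_zero] at this
      exact_mod_cast this.symm
    · show (q i : ℤ) = Int.sign ((q i : ℤ) - b i) * m + b i
      rcases hb i with h | h | h
      · rw [show (q i : ℤ) - b i = m by omega, Int.sign_natCast_of_ne_zero (by omega)]; omega
      · rw [show (q i : ℤ) - b i = 0 by omega, Int.sign_zero]; omega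
      · rw [show (q i : ℤ) - b i = -m by omega, Int.sign_neg,
          Int.sign_natCast_of_ne_zero (by omega)]
        omega

theorem attackedSet_eq_insert_biUnion {n d : ℕ} {q : Fin d → ℕ} (hq : onBoard n d q) :
    attackedSet n d q = insert q ((Icc 1 (n - 1)).biUnion fun m => (queenRing n q m).erase q) := by
  ext b
  by_cases hbq : b = q
  · subst hbq
    simpa [attackedSet, boardFinset, onBoard] using hq
  simp only [attackedSet, boardFinset, queenRing, ringValues, attacks_iff_exists_ring hbq,
    mem_filter, mem_insert, mem_biUnion, mem_erase, Fintype.mem_piFinset, mem_Icc, hbq,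
    false_or, ne_eq, not_false_eq_true, true_and]
  constructor
  · rintro ⟨hb, m, hm, hbm⟩
    obtain ⟨i, hi⟩ := Function.ne_iff.mp hbq
    have := hb i
    have := hbm i
    have := hq i
    exact ⟨m, by omega, fun j => ⟨hb j, hbm j⟩⟩
  · rintro ⟨m, hm, hb⟩
    exact ⟨fun i => (hb i).1, m, hm.1, fun i => (hb i).2⟩

theorem pairwiseDisjoint_queenRing_erase {n d : ℕ} (q : Fin d → ℕ) :
    (Set.Ioi 0).PairwiseDisjoint fun m => (queenRing n q m).erase q := by
  intro m hm m' hm' hne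
  simp only [Function.onFun, disjoint_left, mem_erase, queenRing, Fintype.mem_piFinset,
    ringValues, mem_filter]
  rintro b ⟨hbq, hb⟩ ⟨-, hb'⟩
  obtain ⟨i, hi⟩ := Function.ne_iff.mp hbq
  have := (hb i).2
  have := (hb' i).2
  simp only [Set.mem_Ioi] at hm hm'
  omega

theorem card_attackedSet {n d : ℕ} {q : Fin d → ℕ} (hq : onBoard n d q) :
    #(attackedSet n d q) = ∑ m ∈ Icc 1 (n - 1), #((queenRing n q m).erase q) + 1 := by
  rw [attackedSet_eq_insert_biUnion hq, card_insert_of_notMem (by simp), card_biUnion]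
  exact (pairwiseDisjoint_queenRing_erase q).subset fun m hm => by
    simp only [coe_Icc, Set.mem_Icc] at hm; exact hm.1

theorem sum_card_queenRing_erase_add {n d : ℕ} {q : Fin d → ℕ} (hq : onBoard n d q) :
    ∑ m ∈ Icc 1 (n - 1), #((queenRing n q m).erase q) + (n - 1) =
      ∑ m ∈ Icc 1 (n - 1), #(queenRing n q m) := by
  have hmem : ∀ m, q ∈ queenRing n q m := fun m => by
    simpa [queenRing, ringValues, onBoard] using hq
  simp [← card_erase_add_one (hmem _), sum_add_distrib]

theorem card_ringValues {n x m : ℕ} (hx₁ : 1 ≤ x) (hxn : x ≤ n) (hm : 0 < m) :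
    #(ringValues n x m) = (if m < x then 1 else 0) + 1 + (if x + m ≤ n then 1 else 0) := by
  by_cases h₁ : m < x <;> by_cases h₂ : x + m ≤ n <;> simp only [h₁, h₂, if_true, if_false]
  · exact card_eq_three.mpr ⟨x - m, x, x + m, by omega, by omega, by omega, by
      ext y; simp only [ringValues, mem_filter, mem_Icc, mem_insert, mem_singleton]; omega⟩
  · exact card_eq_two.mpr ⟨x - m, x, by omega, by
      ext y; simp only [ringValues, mem_filter, mem_Icc, mem_insert, mem_singleton]; omega⟩
  · exact card_eq_two.mpr ⟨x, x + m, by omega, by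
      ext y; simp only [ringValues, mem_filter, mem_Icc, mem_insert, mem_singleton]; omega⟩
  · exact card_eq_one.mpr ⟨x, by
      ext y; simp only [ringValues, mem_filter, mem_Icc, mem_singleton]; omega⟩

theorem antitoneOn_card_ringValues {n x : ℕ} (hx₁ : 1 ≤ x) (hxn : x ≤ n) :
    AntitoneOn (fun m => #(ringValues n x m)) (Set.Ioi 0) := by
  intro a ha b hb hab
  simp only [Set.mem_Ioi] at ha hb
  show #(ringValues n x b) ≤ #(ringValues n x a)
  rw [card_ringValues hx₁ hxn ha, card_ringValues hx₁ hxn hb]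
  split_ifs <;> omega

theorem sum_card_ringValues {n x : ℕ} (hx₁ : 1 ≤ x) (hxn : x ≤ n) :
    ∑ m ∈ Icc 1 (n - 1), #(ringValues n x m) = 2 * (n - 1) := by
  have hlow : (Icc 1 (n - 1)).filter (· < x) = Ico 1 x := by
    ext m; simp only [mem_filter, mem_Icc, mem_Ico]; omega
  have hup : (Icc 1 (n - 1)).filter (x + · ≤ n) = Icc 1 (n - x) := by
    ext m; simp only [mem_filter, mem_Icc]; omega
  rw [sum_congr rfl fun m hm => card_ringValues hx₁ hxn (mem_Icc.mp hm).1, sum_add_distrib,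
    sum_add_distrib, sum_boole, sum_boole, hlow, hup]
  simp only [Nat.card_Ico, Nat.card_Icc, Nat.cast_id, sum_const, smul_eq_mul, mul_one]
  omega

theorem card_ringValues_one {n m : ℕ} (hm : m ∈ Icc 1 (n - 1)) : #(ringValues n 1 m) = 2 := by
  rw [mem_Icc] at hm
  rw [card_ringValues le_rfl (by omega) hm.1]
  split_ifs <;> omega

theorem two_pow_mul_le_sum_card_queenRing {n d : ℕ} {q : Fin d → ℕ} (hq : onBoard n d q) :
    2 ^ d * (n - 1) ≤ ∑ m ∈ Icc 1 (n - 1), #(queenRing n q m) := by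
  have hcheb := card_mul_prod_sum_le_card_pow_mul_sum_prod univ (Icc 1 (n - 1))
    (fun i m => #(ringValues n (q i) m)) (fun _ _ _ _ => Nat.zero_le _) fun i _ =>
      (antitoneOn_card_ringValues (hq i).1 (hq i).2).mono fun m hm => by
        simp only [coe_Icc, Set.mem_Icc] at hm; exact hm.1
  simp only [Nat.card_Icc, Nat.add_sub_cancel, Nat.cast_id, card_univ, Fintype.card_fin,
    sum_card_ringValues (hq _).1 (hq _).2, prod_const, mul_pow] at hcheb
  simp only [queenRing, Fintype.card_piFinset]
  rcases Nat.eq_zero_or_pos (n - 1) with h | h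
  · simp [h]
  · refine Nat.le_of_mul_le_mul_left ?_ (pow_pos h d)
    calc (n - 1) ^ d * (2 ^ d * (n - 1)) = (n - 1) * (2 ^ d * (n - 1) ^ d) := by ring
      _ ≤ _ := hcheb

theorem sum_card_queenRing_one {n d : ℕ} :
    ∑ m ∈ Icc 1 (n - 1), #(queenRing n (fun _ : Fin d => 1) m) = 2 ^ d * (n - 1) := by
  rw [sum_congr rfl fun m hm => by
    rw [queenRing, Fintype.card_piFinset, prod_congr rfl fun _ _ => card_ringValues_one hm]]
  simp [mul_comm]

theorem attacked_squares_lower_bound_general (n d : ℕ) (hn : 1 ≤ n) :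
    (∀ q : Fin d → ℕ, onBoard n d q →
      (2 ^ d - 1) * (n - 1) + 1 ≤ (attackedSet n d q).card) ∧
    ((attackedSet n d (fun _ => 1)).card = (2 ^ d - 1) * (n - 1) + 1) := by
  have hcorner : onBoard n d (fun _ => 1) := fun _ => ⟨le_rfl, hn⟩
  refine ⟨fun q hq => ?_, ?_⟩
  · have := two_pow_mul_le_sum_card_queenRing hq
    have := sum_card_queenRing_erase_add hq
    rw [card_attackedSet hq, Nat.sub_one_mul]
    omega
  · have := sum_card_queenRing_one (n := n) (d := d)
    have := sum_card_queenRing_erase_add hcorner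
    rw [card_attackedSet hcorner, Nat.sub_one_mul]
    omega

/-- A queen on the `(n,d)`-board attacks at least `(2^d - 1)*(n - 1) + 1` squares
(including its own); this minimum is attained at the corner `(1,1,…,1)`. -/
theorem attacked_squares_lower_bound (n d : ℕ) (hn : 1 ≤ n) (hd : 1 ≤ d) :
    (∀ q : Fin d → ℕ, onBoard n d q →
      (2 ^ d - 1) * (n - 1) + 1 ≤ (attackedSet n d q).card) ∧
    ((attackedSet n d (fun _ => 1)).card = (2 ^ d - 1) * (n - 1) + 1) :=
  attacked_squares_lower_bound_general n d hn
end

section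
/- For all n, d, k ∈ ℕ⁺, Q_max(n, d + k) ≤ Q_max(n, d) · n^k: if Q is a non-attacking set on the (n, d+k)-board, then for each of the n^k assignments of the last k coordinates, the projection onto the first d coordinates of the queens of Q with those last k coordinates is a non-attacking set on the (n,d)-board, and hence |Q| ≤ Q_max(n,d) · n^k. -/
lemma card_le_qmax (n d : ℕ) (Q : Finset (Fin d → ℕ)) (h : isPartial n d Q) :
    Q.card ≤ Qmax n d := by
  apply le_csSup
  · refine ⟨(boardFinset n d).card, ?_⟩
    rintro x ⟨P, hP, rfl⟩
    apply Finset.card_le_card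
    intro q hq
    simp only [boardFinset, Fintype.mem_piFinset, Finset.mem_Icc]
    exact hP.1 q hq
  · exact ⟨Q, h, rfl⟩

lemma proj_partial (n d k : ℕ) (Q : Finset (Fin (d + k) → ℕ))
    (hQ : isPartial n (d + k) Q) (t : Fin k → ℕ) :
    isPartial n d
      ((Q.filter (fun q => ∀ j : Fin k, q (Fin.natAdd d j) = t j)).image
        (fun q (i : Fin d) => q (Fin.castAdd k i))) := by
  constructor
  · intro q' hq'
    simp only [Finset.mem_image, Finset.mem_filter] at hq'
    obtain ⟨q, ⟨hqQ, -⟩, rfl⟩ := hq'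
    exact fun i => hQ.1 q hqQ (Fin.castAdd k i)
  · rintro a' ha' b' hb' hne ⟨m, ε, hε01, hεne, heq⟩
    simp only [Finset.mem_image, Finset.mem_filter] at ha' hb'
    obtain ⟨a, ⟨haQ, hat⟩, rfl⟩ := ha'
    obtain ⟨b, ⟨hbQ, hbt⟩, rfl⟩ := hb'
    have hab : a ≠ b := fun h => hne (by rw [h])
    apply hQ.2 a haQ b hbQ hab
    refine ⟨m, Fin.addCases ε (fun _ => 0), ?_, ?_, ?_⟩
    · intro i
      refine Fin.addCases (fun i => ?_) (fun j => ?_) i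
      · simpa using hε01 i
      · simp
    · intro h
      apply hεne
      funext i
      have := congrFun h (Fin.castAdd k i)
      simpa using this
    · intro i
      refine Fin.addCases (fun i => ?_) (fun j => ?_) i
      · simpa using heq i
      · simp [hat j, hbt j]

/-- `Qmax(n, d+k) ≤ Qmax(n,d) * n^k`: if `Q` is a non-attacking set on the
`(n,d+k)`-board then, for each assignment `t` of the last `k` coordinates, the
projection onto the first `d` coordinates of the queens of `Q` with last coordinates
`t` is a non-attacking set on the `(n,d)`-board, and hence `|Q| ≤ Qmax(n,d) * n^k`. -/
theorem qmax_dimension_bound (n d k : ℕ) (hn : 1 ≤ n) (hd : 1 ≤ d) (hk : 1 ≤ k) :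
    (∀ Q : Finset (Fin (d + k) → ℕ), isPartial n (d + k) Q →
      (∀ t : Fin k → ℕ, onBoard n k t →
        isPartial n d
          ((Q.filter (fun q => ∀ j : Fin k, q (Fin.natAdd d j) = t j)).image
            (fun q (i : Fin d) => q (Fin.castAdd k i)))) ∧
      Q.card ≤ Qmax n d * n ^ k) ∧
    Qmax n (d + k) ≤ Qmax n d * n ^ k := by
  have main : ∀ Q : Finset (Fin (d + k) → ℕ), isPartial n (d + k) Q →
      (∀ t : Fin k → ℕ, onBoard n k t →
        isPartial n d
          ((Q.filter (fun q => ∀ j : Fin k, q (Fin.natAdd d j) = t j)).image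
            (fun q (i : Fin d) => q (Fin.castAdd k i)))) ∧
      Q.card ≤ Qmax n d * n ^ k := by
    intro Q hQ
    refine ⟨fun t _ => proj_partial n d k Q hQ t, ?_⟩
    have hcard : Q.card = ∑ t ∈ boardFinset n k,
        (Q.filter fun q => (fun j => q (Fin.natAdd d j)) = t).card := by
      apply Finset.card_eq_sum_card_fiberwise
      intro q hq
      simp only [boardFinset, Finset.mem_coe, Fintype.mem_piFinset, Finset.mem_Icc]
      exact fun j => hQ.1 q hq (Fin.natAdd d j)
    have hboard : (boardFinset n k).card = n ^ k := by
      simp [boardFinset, Fintype.card_piFinset, Nat.card_Icc]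
    calc Q.card = ∑ t ∈ boardFinset n k,
            (Q.filter fun q => (fun j => q (Fin.natAdd d j)) = t).card := hcard
      _ ≤ ∑ _t ∈ boardFinset n k, Qmax n d := by
          apply Finset.sum_le_sum
          intro t _
          have hfe : (Q.filter fun q => (fun j => q (Fin.natAdd d j)) = t)
              = Q.filter (fun q => ∀ j : Fin k, q (Fin.natAdd d j) = t j) := by
            apply Finset.filter_congr
            intro q _
            simp [funext_iff]
          rw [hfe]
          have hinj : Set.InjOn (fun q (i : Fin d) => q (Fin.castAdd k i))
              (↑(Q.filter (fun q => ∀ j : Fin k, q (Fin.natAdd d j) = t j)) : Set (Fin (d+k) → ℕ)) := by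
            intro a ha b hb hab
            simp only [Finset.coe_filter, Set.mem_setOf_eq] at ha hb
            funext i
            refine Fin.addCases (fun i => congrFun hab i) (fun j => ?_) i
            rw [ha.2 j, hb.2 j]
          rw [← Finset.card_image_of_injOn hinj]
          exact card_le_qmax n d _ (proj_partial n d k Q hQ t)
      _ = (boardFinset n k).card * Qmax n d := by rw [Finset.sum_const, smul_eq_mul]
      _ = Qmax n d * n ^ k := by rw [hboard, Nat.mul_comm]
  refine ⟨main, ?_⟩
  apply csSup_le
  · exact ⟨0, ∅, ⟨by simp [isPartial, nonAttacking], rfl⟩⟩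
  · rintro x ⟨Q, hQ, rfl⟩
    exact (main Q hQ).2
end

section
/- For all k, d ∈ ℕ⁺, Q_max(2k, d) ≤ k^d. Consequently, for every even n with n < 2^d, Q_max(n,d) < n^{d−1}. -/
/-
Halving every coordinate, `q ↦ ⌈q/2⌉`, maps the `(2k,d)`-board onto the `(k,d)`-board, and two
distinct queens with the same image differ by at most one in every coordinate, so they attack each
other along the direction `a - b` with step `m = 1`. Hence a non-attacking set injects into the
`(k,d)`-board and has at most `k^d` queens. For even `n = 2r < 2^d`, this gives
`Qmax n d ≤ r^d = r^(d-1) * r < r^(d-1) * 2^(d-1) = n^(d-1)`.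
-/

theorem attacks_of_ne_of_abs_sub_le_one {d : ℕ} {a b : Fin d → ℕ} (hne : a ≠ b)
    (hclose : ∀ i, |(a i : ℤ) - b i| ≤ 1) : attacks a b := by
  refine ⟨1, fun i => (a i : ℤ) - b i, fun i => ?_, fun h => hne ?_, fun i => by ring⟩
  · have := abs_le.mp (hclose i)
    dsimp only
    omega
  · funext i
    have := congrFun h i
    simp only [Pi.zero_apply, sub_eq_zero] at this
    exact_mod_cast this

theorem card_le_pow_of_isPartial_two_mul {k d : ℕ} {Q : Finset (Fin d → ℕ)}
    (hQ : isPartial (2 * k) d Q) : Q.card ≤ k ^ d := by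
  classical
  let halve : (Fin d → ℕ) → (Fin d → ℕ) := fun q i => (q i + 1) / 2
  have hinj : Set.InjOn halve Q := by
    intro a ha b hb hab
    by_contra hne
    refine hQ.2 a ha b hb hne (attacks_of_ne_of_abs_sub_le_one hne fun i => ?_)
    rw [abs_le]
    have := congrFun hab i
    simp only [halve] at this
    have := hQ.1 a ha i
    have := hQ.1 b hb i
    omega
  have hmaps : Q.image halve ⊆ boardFinset k d := by
    simp only [Finset.image_subset_iff, halve, boardFinset, Fintype.mem_piFinset, Finset.mem_Icc]
    intro q hq i
    have := hQ.1 q hq i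
    omega
  calc Q.card = (Q.image halve).card := (Finset.card_image_of_injOn hinj).symm
    _ ≤ (boardFinset k d).card := Finset.card_le_card hmaps
    _ = k ^ d := by simp [boardFinset, Fintype.card_piFinset]

theorem Qmax_le_of_forall_card_le {n d B : ℕ}
    (h : ∀ Q : Finset (Fin d → ℕ), isPartial n d Q → Q.card ≤ B) : Qmax n d ≤ B := by
  refine csSup_le ⟨0, ∅, ⟨by simp, by simp [nonAttacking]⟩, rfl⟩ ?_
  rintro _ ⟨Q, hQ, rfl⟩
  exact h Q hQ

theorem Qmax_two_mul_le (k d : ℕ) : Qmax (2 * k) d ≤ k ^ d :=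
  Qmax_le_of_forall_card_le fun _ => card_le_pow_of_isPartial_two_mul

theorem pow_succ_lt_two_mul_pow {r m : ℕ} (hr : 0 < r) (h : r < 2 ^ m) :
    r ^ (m + 1) < (2 * r) ^ m :=
  calc r ^ (m + 1) = r ^ m * r := pow_succ r m
    _ < r ^ m * 2 ^ m := Nat.mul_lt_mul_of_pos_left h (by positivity)
    _ = (2 * r) ^ m := by rw [mul_pow, mul_comm]

theorem qmax_even_bound_general (d : ℕ) :
    (∀ k : ℕ, 1 ≤ k → Qmax (2 * k) d ≤ k ^ d) ∧
    (∀ n : ℕ, 1 ≤ n → Even n → n < 2 ^ d → Qmax n d < n ^ (d - 1)) := by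
  refine ⟨fun k _ => Qmax_two_mul_le k d, ?_⟩
  rintro n hn ⟨r, rfl⟩ hlt
  obtain ⟨m, rfl⟩ : ∃ m, d = m + 1 :=
    Nat.exists_eq_succ_of_ne_zero fun hd => by subst hd; omega
  have hr : r < 2 ^ m := by rw [pow_succ] at hlt; omega
  calc Qmax (r + r) (m + 1) = Qmax (2 * r) (m + 1) := by rw [two_mul]
    _ ≤ r ^ (m + 1) := Qmax_two_mul_le r (m + 1)
    _ < (2 * r) ^ m := pow_succ_lt_two_mul_pow (by omega) hr
    _ = (r + r) ^ (m + 1 - 1) := by rw [two_mul, Nat.add_sub_cancel]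

/-- `Qmax(2k,d) ≤ k^d`; consequently, for every even `n` with `n < 2^d`,
`Qmax(n,d) < n^(d-1)`. -/
theorem qmax_even_bound (d : ℕ) (hd : 1 ≤ d) :
    (∀ k : ℕ, 1 ≤ k → Qmax (2 * k) d ≤ k ^ d) ∧
    (∀ n : ℕ, 1 ≤ n → Even n → n < 2 ^ d → Qmax n d < n ^ (d - 1)) :=
  qmax_even_bound_general d
end

section
/- Let Q be a non-attacking set of queens on the (n,d)-board with d ≥ 2, let j ∈ {1,…,d} and i ∈ {1,…,n}. Then the queens of Q lying in the i-th layer in the j-th dimension, projected onto the remaining d−1 coordinates, form a non-attacking set on the (n,d−1)-board; hence |{q ∈ Q : q_j = i}| ≤ Q_max(n, d−1). -/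
/-! Two queens in the same layer in dimension `j` attack each other as soon as their projections
forgetting coordinate `j` do: extend the attack direction by `0` in coordinate `j`. Projection is
injective on a layer, and `Qmax` bounds the size of the projected layer because every
non-attacking set lies inside the finite board. -/

open Finset

variable {n d : ℕ}

theorem onBoard.removeNth {q : Fin (d + 1) → ℕ} (hq : onBoard n (d + 1) q) (j : Fin (d + 1)) :
    onBoard n d (j.removeNth q) :=
  fun l => hq (j.succAbove l)

theorem eq_of_removeNth_eq {a b : Fin (d + 1) → ℕ} {j : Fin (d + 1)} (hj : a j = b j)
    (h : j.removeNth a = j.removeNth b) : a = b :=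
  funext (j.forall_iff_succAbove.2 ⟨hj, congrFun h⟩)

theorem attacks_of_attacks_removeNth {a b : Fin (d + 1) → ℕ} {j : Fin (d + 1)} (hj : a j = b j)
    (h : attacks (j.removeNth a) (j.removeNth b)) : attacks a b := by
  obtain ⟨m, ε, hε, hε0, hab⟩ := h
  refine ⟨m, j.insertNth 0 ε, ?_, ?_, ?_⟩
  · refine j.forall_iff_succAbove.2 ⟨by simp, fun l => ?_⟩
    simpa only [Fin.insertNth_apply_succAbove] using hε l
  · intro h0
    exact hε0 (funext fun l => by simpa using congrFun h0 (j.succAbove l))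
  · refine j.forall_iff_succAbove.2 ⟨by simp [hj], fun l => ?_⟩
    simpa only [Fin.insertNth_apply_succAbove, Fin.removeNth_apply] using hab l

theorem isPartial_image_removeNth_layer {Q : Finset (Fin (d + 1) → ℕ)}
    (hQ : isPartial n (d + 1) Q) (j : Fin (d + 1)) (i : ℕ) :
    isPartial n d ((Q.filter (fun q => q j = i)).image j.removeNth) := by
  obtain ⟨hboard, hnonAttacking⟩ := hQ
  refine ⟨?_, ?_⟩
  · simp only [mem_image, mem_filter]
    rintro _ ⟨q, ⟨hq, -⟩, rfl⟩
    exact (hboard q hq).removeNth j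
  · simp only [nonAttacking, mem_image, mem_filter]
    rintro _ ⟨a, ⟨ha, haj⟩, rfl⟩ _ ⟨b, ⟨hb, hbj⟩, rfl⟩ hne hattack
    exact hnonAttacking a ha b hb (by rintro rfl; exact hne rfl)
      (attacks_of_attacks_removeNth (haj.trans hbj.symm) hattack)

theorem card_image_removeNth {S : Finset (Fin (d + 1) → ℕ)} {j : Fin (d + 1)} {c : ℕ}
    (hS : ∀ q ∈ S, q j = c) : (S.image j.removeNth).card = S.card :=
  card_image_of_injOn fun a ha b hb => eq_of_removeNth_eq ((hS a ha).trans (hS b hb).symm)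

theorem bddAbove_card_isPartial (n d : ℕ) :
    BddAbove {k | ∃ Q : Finset (Fin d → ℕ), isPartial n d Q ∧ Q.card = k} := by
  refine ⟨(boardFinset n d).card, ?_⟩
  rintro _ ⟨Q, ⟨hboard, -⟩, rfl⟩
  unfold onBoard at hboard
  refine card_le_card fun q hq => ?_
  simpa only [boardFinset, Fintype.mem_piFinset, mem_Icc] using hboard q hq

theorem isPartial.card_le_Qmax {Q : Finset (Fin d → ℕ)} (hQ : isPartial n d Q) :
    Q.card ≤ Qmax n d :=
  le_csSup (bddAbove_card_isPartial n d) ⟨Q, hQ, rfl⟩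

theorem layer_inequality_general (n d : ℕ)
    (Q : Finset (Fin (d + 1) → ℕ)) (hQ : isPartial n (d + 1) Q)
    (j : Fin (d + 1)) (i : ℕ) :
    isPartial n d
      ((Q.filter (fun q => q j = i)).image
        (fun q (l : Fin d) => q (j.succAbove l))) ∧
    (Q.filter (fun q => q j = i)).card ≤ Qmax n d := by
  have hlayer := isPartial_image_removeNth_layer hQ j i
  have hcard := card_image_removeNth fun q (hq : q ∈ Q.filter (fun q => q j = i)) =>
    (mem_filter.1 hq).2
  exact ⟨hlayer, hcard.symm.trans_le hlayer.card_le_Qmax⟩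

/-- Layer inequality: for a non-attacking set `Q` on the `(n,d+1)`-board (a board of
dimension `≥ 2`), the queens in the `i`-th layer in the `j`-th dimension, projected
onto the remaining `d` coordinates, form a non-attacking set on the `(n,d)`-board;
hence the number of queens of `Q` in that layer is at most `Qmax(n,d)`. -/
theorem layer_inequality (n d : ℕ) (hn : 1 ≤ n) (hd : 1 ≤ d)
    (Q : Finset (Fin (d + 1) → ℕ)) (hQ : isPartial n (d + 1) Q)
    (j : Fin (d + 1)) (i : ℕ) (hi1 : 1 ≤ i) (hin : i ≤ n) :
    isPartial n d
      ((Q.filter (fun q => q j = i)).image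
        (fun q (l : Fin d) => q (j.succAbove l))) ∧
    (Q.filter (fun q => q j = i)).card ≤ Qmax n d :=
  layer_inequality_general n d Q hQ j i
end

section
/- (Cube cliques.) Let h ≥ 1 be an integer and let s be a point of the (n,d)-board with s_i + h ≤ n for all i. Then the 2^d points {(s_1 + a_1·h, …, s_d + a_d·h) : a ∈ {0,1}^d} pairwise attack each other; moreover, if h is even, the center point (s_1 + h/2, …, s_d + h/2) attacks all 2^d of these points. Consequently, every non-attacking set of queens on the (n,d)-board contains at most one of these 2^d points (at most one of the 2^d + 1 points when h is even). -/
/-!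
Two corners `s + a h` and `s + b h` of the cube differ by `(a - b) h`, and `a - b` is a nonzero
vector with entries in `{-1, 0, 1}`; so they lie on a common line of attack with step `h`.
When `h = 2k`, the centre `s + k` differs from the corner `s + a h` by `(1 - 2a) k`, and
`1 - 2a` has all entries `±1`. A non-attacking set meets any such clique in at most one point.
-/

theorem attacks.symm {d : ℕ} {a b : Fin d → ℕ} (hab : attacks a b) : attacks b a := by
  obtain ⟨m, ε, hε, hε0, hab⟩ := hab
  exact ⟨-m, ε, hε, hε0, fun i => by rw [hab i]; ring⟩

theorem nonAttacking.card_filter_le_one {d : ℕ} {Q : Finset (Fin d → ℕ)} (hQ : nonAttacking Q)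
    {p : (Fin d → ℕ) → Prop} [DecidablePred p]
    (hp : ∀ x y, p x → p y → x ≠ y → attacks x y) : (Q.filter p).card ≤ 1 := by
  rw [Finset.card_le_one]
  intro x hx y hy
  rw [Finset.mem_filter] at hx hy
  by_contra hxy
  exact hQ x hx.1 y hy.1 hxy (hp x y hx.2 hy.2 hxy)

theorem attacks_add_mul_of_ne {d : ℕ} (s : Fin d → ℕ) (h : ℕ) {a b : Fin d → ℕ}
    (ha : ∀ i, a i ≤ 1) (hb : ∀ i, b i ≤ 1) (hab : a ≠ b) :
    attacks (fun i => s i + a i * h) (fun i => s i + b i * h) := by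
  refine ⟨h, fun i => (a i : ℤ) - b i, fun i => by grind, fun h0 => ?_, fun i => by push_cast; ring⟩
  obtain ⟨i, hi⟩ := Function.ne_iff.mp hab
  have := congrFun h0 i
  simp only [Pi.zero_apply, sub_eq_zero, Nat.cast_inj] at this
  exact hi this

theorem attacks_add_half_of_even {d : ℕ} (hd : 0 < d) (s : Fin d → ℕ) {h : ℕ} (heven : Even h)
    {a : Fin d → ℕ} (ha : ∀ i, a i ≤ 1) :
    attacks (fun i => s i + h / 2) (fun i => s i + a i * h) := by
  obtain ⟨k, rfl⟩ := heven
  have hk : (k + k) / 2 = k := by omega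
  refine ⟨k, fun i => 1 - 2 * (a i : ℤ), fun i => by grind, fun h0 => ?_, fun i => ?_⟩
  · have := congrFun h0 ⟨0, hd⟩
    simp only [Pi.zero_apply] at this
    omega
  · rw [hk]
    push_cast
    ring

open scoped Classical in
theorem cube_cliques_general (n d h : ℕ) (hd : 1 ≤ d)
    (s : Fin d → ℕ) :
    (∀ a b : Fin d → ℕ, (∀ i, a i ≤ 1) → (∀ i, b i ≤ 1) → a ≠ b →
      attacks (fun i => s i + a i * h) (fun i => s i + b i * h)) ∧
    (Even h → ∀ a : Fin d → ℕ, (∀ i, a i ≤ 1) →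
      attacks (fun i => s i + h / 2) (fun i => s i + a i * h)) ∧
    (∀ Q : Finset (Fin d → ℕ), isPartial n d Q →
      (Q.filter (fun q => ∃ a : Fin d → ℕ, (∀ i, a i ≤ 1) ∧
        q = fun i => s i + a i * h)).card ≤ 1) ∧
    (Even h → ∀ Q : Finset (Fin d → ℕ), isPartial n d Q →
      (Q.filter (fun q => (q = fun i => s i + h / 2) ∨
        ∃ a : Fin d → ℕ, (∀ i, a i ≤ 1) ∧ q = fun i => s i + a i * h)).card ≤ 1) := by
  have ne_of_corner_ne {a b : Fin d → ℕ}
      (hne : (fun i => s i + a i * h) ≠ fun i => s i + b i * h) : a ≠ b :=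
    fun hab => hne (hab ▸ rfl)
  refine ⟨fun a b ha hb hab => attacks_add_mul_of_ne s h ha hb hab,
    fun heven a ha => attacks_add_half_of_even hd s heven ha, fun Q hQ => ?_, fun heven Q hQ => ?_⟩
  · refine hQ.2.card_filter_le_one ?_
    rintro _ _ ⟨a, ha, rfl⟩ ⟨b, hb, rfl⟩ hne
    exact attacks_add_mul_of_ne s h ha hb (ne_of_corner_ne hne)
  · refine hQ.2.card_filter_le_one ?_
    rintro _ _ (rfl | ⟨a, ha, rfl⟩) (rfl | ⟨b, hb, rfl⟩) hne
    · exact absurd rfl hne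
    · exact attacks_add_half_of_even hd s heven hb
    · exact (attacks_add_half_of_even hd s heven ha).symm
    · exact attacks_add_mul_of_ne s h ha hb (ne_of_corner_ne hne)

open scoped Classical in
/-- Cube cliques: for `h ≥ 1` and a board point `s` with `s i + h ≤ n` for all `i`,
the `2^d` points `(s₁ + a₁·h, …, s_d + a_d·h)`, `a ∈ {0,1}^d`, pairwise attack each
other; if `h` is even, the center `(s₁ + h/2, …, s_d + h/2)` attacks all of them.
Consequently every non-attacking set on the `(n,d)`-board contains at most one of
these `2^d` points (at most one of the `2^d + 1` points when `h` is even). -/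
theorem cube_cliques (n d h : ℕ) (hd : 1 ≤ d) (hh : 1 ≤ h)
    (s : Fin d → ℕ) (hs : onBoard n d s) (hsh : ∀ i, s i + h ≤ n) :
    (∀ a b : Fin d → ℕ, (∀ i, a i ≤ 1) → (∀ i, b i ≤ 1) → a ≠ b →
      attacks (fun i => s i + a i * h) (fun i => s i + b i * h)) ∧
    (Even h → ∀ a : Fin d → ℕ, (∀ i, a i ≤ 1) →
      attacks (fun i => s i + h / 2) (fun i => s i + a i * h)) ∧
    (∀ Q : Finset (Fin d → ℕ), isPartial n d Q →
      (Q.filter (fun q => ∃ a : Fin d → ℕ, (∀ i, a i ≤ 1) ∧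
        q = fun i => s i + a i * h)).card ≤ 1) ∧
    (Even h → ∀ Q : Finset (Fin d → ℕ), isPartial n d Q →
      (Q.filter (fun q => (q = fun i => s i + h / 2) ∨
        ∃ a : Fin d → ℕ, (∀ i, a i ≤ 1) ∧ q = fun i => s i + a i * h)).card ≤ 1) :=
  cube_cliques_general n d h hd s
end
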